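/- arXiv:1212.3090 — 6 statements merged into one kernel-verified Lean document; each statement's English description precedes it below -/
import Mathlib

section
/- Let B_1, ..., B_m be Laurent difference monomials in difference indeterminates y_1, ..., y_n (i.e., B_i = ∏_{j=1}^n ∏_{k=0}^s (σ^k y_j)^{d_{ijk}} with integer exponents d_{ijk}), and let M = (d_{ij}) be their symbolic support matrix over ℚ[x], where d_{ij} = Σ_k d_{ijk} x^k. Then the difference transcendence degree of ℚ⟨B_1, ..., B_m⟩ over ℚ equals the rank of M over the field ℚ(x). -/
/-- A family `a : ι → K` in a difference field `(K, σ)` is transformally independent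
over `ℚ` if the family of all transforms `σ^k (a i)` is algebraically independent over `ℚ`. -/
def TransformallyIndependent {K : Type*} [Field K] [Algebra ℚ K]
    (σ : K →+* K) {ι : Type*} (a : ι → K) : Prop :=
  AlgebraicIndependent ℚ (fun p : ι × ℕ => (σ ^ p.2) (a p.1))

/-- The difference transcendence degree over `ℚ` of the difference field generated by the
finite family `a`: the maximal cardinality of a transformally independent subfamily. -/
noncomputable def dtrdeg {K : Type*} [Field K] [Algebra ℚ K]
    (σ : K →+* K) {m : ℕ} (a : Fin m → K) : ℕ :=
  sSup {k : ℕ | ∃ S : Finset (Fin m), S.card = k ∧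
    TransformallyIndependent σ (fun i : {x // x ∈ S} => a i)}

/-!
The transforms `σ^l B_i` are Laurent monomials in the algebraically independent elements
`σ^k y_j`, and Laurent monomials in algebraically independent elements are algebraically
independent exactly when their exponent vectors are `ℤ`-linearly independent. Reading the
exponent of `σ^k y_j` as `x^k` in the `j`-th coordinate turns the exponent vector of `σ^l B_i`
into `x^l • M_i`; the family `x^l • M_i` is `ℚ`-linearly independent iff the rows `M_i` are
`ℚ[x]`-linearly independent, i.e. `ℚ(x)`-linearly independent. So the transformally independent
subfamilies of `B` are those indexing linearly independent rows of `M`, and the largest of them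
have size `rank M`.
-/

section LaurentMonomial

variable {ι G : Type*} [CommGroup G] (ζ : ι → G)

def laurentMonomial (v : ι →₀ ℤ) : G := v.prod fun i e => ζ i ^ e

@[simp]
lemma laurentMonomial_zero : laurentMonomial ζ 0 = 1 := Finsupp.prod_zero_index

lemma laurentMonomial_add (v w : ι →₀ ℤ) :
    laurentMonomial ζ (v + w) = laurentMonomial ζ v * laurentMonomial ζ w :=
  Finsupp.prod_add_index' (fun _ => zpow_zero _) fun _ => zpow_add _

@[simp]
lemma laurentMonomial_single (i : ι) (e : ℤ) :
    laurentMonomial ζ (Finsupp.single i e) = ζ i ^ e :=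
  Finsupp.prod_single_index (zpow_zero _)

lemma laurentMonomial_zsmul (c : ℤ) (v : ι →₀ ℤ) :
    laurentMonomial ζ (c • v) = laurentMonomial ζ v ^ c := by
  induction v using Finsupp.induction_linear with
  | zero => simp
  | add v w hv hw => rw [smul_add, laurentMonomial_add, hv, hw, laurentMonomial_add, mul_zpow]
  | single i e => rw [Finsupp.smul_single, laurentMonomial_single, laurentMonomial_single,
      smul_eq_mul, mul_comm, zpow_mul]

lemma laurentMonomial_sum {α : Type*} (s : Finset α) (f : α → ι →₀ ℤ) :
    laurentMonomial ζ (∑ a ∈ s, f a) = ∏ a ∈ s, laurentMonomial ζ (f a) :=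
  (Finsupp.prod_finsetSum_index (fun _ => zpow_zero _) fun _ => zpow_add _).symm

lemma laurentMonomial_laurentMonomial {T : Type*} (t : T → ι →₀ ℤ) (β : T →₀ ℤ) :
    laurentMonomial (fun a => laurentMonomial ζ (t a)) β =
      laurentMonomial ζ (Finsupp.linearCombination ℤ t β) := by
  induction β using Finsupp.induction_linear with
  | zero => simp
  | add β γ hβ hγ => rw [laurentMonomial_add, hβ, hγ, map_add, laurentMonomial_add]
  | single a e => simp [laurentMonomial_zsmul]

end LaurentMonomial

section AlgebraicIndependence

open MvPolynomial

variable {ι R : Type*} [CommRing R]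

theorem algebraicIndependent_iff_linearIndependent_monomial {A : Type*} [CommRing A]
    [Algebra R A] {x : ι → A} :
    AlgebraicIndependent R x ↔
      LinearIndependent R fun α : ι →₀ ℕ => aeval x (monomial α (1 : R)) := by
  constructor
  · intro hx
    have := (basisMonomials ι R).linearIndependent.map' (aeval x).toLinearMap
      (LinearMap.ker_eq_bot.mpr hx)
    rwa [coe_basisMonomials] at this
  · intro hx
    rw [AlgebraicIndependent, ← AlgHom.coe_toLinearMap,
      ← (basisMonomials ι R).constr_self R (aeval x).toLinearMap]
    refine (basisMonomials ι R).injective_constr_of_linearIndependent ?_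
    simpa [coe_basisMonomials] using hx

lemma Finset.exists_add_nonneg (s : Finset (ι →₀ ℤ)) :
    ∃ N : ι →₀ ℤ, ∀ w ∈ s, 0 ≤ w + N := by
  refine ⟨∑ w ∈ s, w.mapRange (|·|) abs_zero, fun w hw i => ?_⟩
  have : |w i| ≤ ∑ w' ∈ s, |w' i| :=
    Finset.single_le_sum (f := fun w' : ι →₀ ℤ => |w' i|) (fun _ _ => abs_nonneg _) hw
  simp only [Finsupp.coe_add, Pi.add_apply, Finsupp.finsetSum_apply, Finsupp.mapRange_apply,
    Finsupp.coe_zero, Pi.zero_apply]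
  linarith [neg_abs_le (w i)]

variable {K : Type*} [Field K] [Algebra R K]

lemma aeval_monomial_eq_laurentMonomial (u : ι → Kˣ) (α : ι →₀ ℕ) :
    aeval (fun i => (u i : K)) (monomial α (1 : R)) =
      laurentMonomial u (α.mapRange Nat.cast Nat.cast_zero) := by
  rw [MvPolynomial.aeval_monomial, map_one, one_mul, laurentMonomial,
    Finsupp.prod_mapRange_index fun _ => zpow_zero _, Finsupp.prod, Finsupp.prod, Units.coe_prod]
  simp

theorem linearIndependent_laurentMonomial {u : ι → Kˣ}
    (hu : AlgebraicIndependent R fun i => (u i : K)) :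
    LinearIndependent R fun v : ι →₀ ℤ => ((laurentMonomial u v : Kˣ) : K) := by
  rw [linearIndependent_iff_finset_linearIndependent]
  intro s
  obtain ⟨N, hN⟩ := s.exists_add_nonneg
  -- multiplying by the monomial with exponent `N` turns the Laurent monomials into monomials
  let ν : s → ι →₀ ℕ := fun w => (w.1 + N).mapRange Int.toNat Int.toNat_zero
  have hν (w : s) : (ν w).mapRange Nat.cast Nat.cast_zero = w.1 + N := by
    ext i
    simpa [ν] using hN w.1 w.2 i
  have hν_inj : Function.Injective ν := fun w w' h =>
    Subtype.ext (add_right_cancel (by rw [← hν, ← hν, h]))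
  have hmono : LinearIndependent R fun w : s => ((laurentMonomial u (w.1 + N) : Kˣ) : K) := by
    simpa [Function.comp_def, aeval_monomial_eq_laurentMonomial, hν] using
      (algebraicIndependent_iff_linearIndependent_monomial.mp hu).comp ν hν_inj
  refine .of_comp (LinearMap.mulRight R ((laurentMonomial u N : Kˣ) : K)) ?_
  simpa [Function.comp_def, laurentMonomial_add] using hmono

theorem algebraicIndependent_laurentMonomial_iff {u : ι → Kˣ}
    (hu : AlgebraicIndependent R fun i => (u i : K)) {T : Type*} (t : T → ι →₀ ℤ) :
    AlgebraicIndependent R (fun a => ((laurentMonomial u (t a) : Kˣ) : K)) ↔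
      LinearIndependent ℤ t := by
  have : Nontrivial R := (algebraMap R K).domain_nontrivial
  let E : (T →₀ ℕ) → ι →₀ ℤ := fun α =>
    Finsupp.linearCombination ℤ t (α.mapRange Nat.cast Nat.cast_zero)
  have haeval (α : T →₀ ℕ) :
      aeval (fun a => ((laurentMonomial u (t a) : Kˣ) : K)) (monomial α (1 : R)) =
        laurentMonomial u (E α) := by
    rw [aeval_monomial_eq_laurentMonomial (fun a => laurentMonomial u (t a)),
      laurentMonomial_laurentMonomial]
  simp only [algebraicIndependent_iff_linearIndependent_monomial, haeval]
  constructor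
  · intro h
    rw [linearIndependent_iff]
    intro l hl
    -- split `l` into positive and negative parts: `X^l⁺ - X^l⁻` is an algebraic relation
    let p : T →₀ ℕ := l.mapRange Int.toNat Int.toNat_zero
    let q : T →₀ ℕ := (-l).mapRange Int.toNat Int.toNat_zero
    have hpq : p.mapRange Nat.cast Nat.cast_zero - q.mapRange Nat.cast Nat.cast_zero = l := by
      ext a
      simp [p, q]
    have hE : E p = E q := by
      rw [← sub_eq_zero, ← map_sub, hpq, hl]
    have : p = q := h.injective (congrArg (fun v => ((laurentMonomial u v : Kˣ) : K)) hE)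
    rw [← hpq, this, sub_self]
  · intro h
    exact (linearIndependent_laurentMonomial hu).comp E
      (h.finsuppLinearCombination_injective.comp
        (Finsupp.mapRange_injective _ _ Nat.cast_injective))

end AlgebraicIndependence

theorem Module.Basis.linearIndependent_smul_iff {R S M ι κ : Type*} [CommSemiring R]
    [Semiring S] [Algebra R S] [AddCommMonoid M] [Module R M] [Module S M]
    [IsScalarTower R S M] (b : Basis κ R S) (v : ι → M) :
    LinearIndependent R (fun p : ι × κ => b p.2 • v p.1) ↔ LinearIndependent S v := by
  have hb : Finsupp.linearCombination R b = b.repr.symm.toLinearMap := by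
    ext; simp
  rw [LinearIndependent, LinearIndependent, Finsupp.linearCombination_smul, hb,
    LinearMap.coe_comp, LinearMap.coe_comp, LinearEquiv.coe_coe]
  exact Function.Injective.of_comp_iff' _
    ((Finsupp.mapRange.linearEquiv b.repr.symm).bijective.comp
      (Finsupp.curryLinearEquiv R).bijective)

open Polynomial

theorem linearIndependent_X_pow_smul_iff {R M ι : Type*} [CommRing R] [AddCommMonoid M]
    [Module R M] [Module R[X] M] [IsScalarTower R R[X] M] (v : ι → M) :
    LinearIndependent R (fun p : ι × ℕ => (X ^ p.2 : R[X]) • v p.1) ↔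
      LinearIndependent R[X] v := by
  simpa [coe_basisMonomials, X_pow_eq_monomial] using
    (basisMonomials R).linearIndependent_smul_iff v

theorem Matrix.rank_eq_sSup_card_linearIndependent_rows {F m n : Type*} [Field F]
    [Fintype m] [Fintype n] (A : Matrix m n F) :
    A.rank = sSup {k | ∃ S : Finset m, S.card = k ∧ LinearIndependent F fun i : S => A i} := by
  classical
  have hle (S : Finset m) (hS : LinearIndependent F fun i : S => A i) : S.card ≤ A.rank := by
    simpa using (hS.rank_matrix (M := A.submatrix Subtype.val id)).symm.trans_le
      (A.rank_submatrix_le Subtype.val id)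
  refine (IsGreatest.csSup_eq ⟨?_, ?_⟩).symm
  · obtain ⟨b, -, -, hspan, hb⟩ :=
      exists_linearIndepOn_extension (linearIndepOn_empty F A) (Set.empty_subset Set.univ)
    have hli : LinearIndepOn F A (b.toFinset : Set m) := by rwa [Set.coe_toFinset]
    refine ⟨b.toFinset, le_antisymm (hle _ hli) ?_, hli⟩
    rw [A.rank_eq_finrank_span_row, ← Fintype.card_coe,
      ← finrank_span_eq_card (b := fun i : b.toFinset => A i) hli]
    refine Submodule.finrank_mono (Submodule.span_le.mpr ?_)
    rintro _ ⟨i, rfl⟩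
    refine Submodule.span_mono ?_ (hspan ⟨i, Set.mem_univ i, rfl⟩)
    rintro _ ⟨j, hj, rfl⟩
    exact ⟨⟨j, Set.mem_toFinset.mpr hj⟩, rfl⟩
  · rintro k ⟨S, rfl, hS⟩
    exact hle S hS

/-- Sends the exponent of `σ^k y_j` to `x^k` in coordinate `j`. -/
noncomputable def symbolicSupport (J : Type*) [DecidableEq J] :
    ((J × ℕ) →₀ ℤ) →ₗ[ℤ] (J → ℚ[X]) :=
  Finsupp.linearCombination ℤ fun p => (X ^ p.2 : ℚ[X]) • Pi.single p.1 1

lemma symbolicSupport_injective (J : Type*) [DecidableEq J] :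
    Function.Injective (symbolicSupport J) := by
  have : LinearIndependent ℚ fun p : J × ℕ => (X ^ p.2 : ℚ[X]) • Pi.single p.1 1 :=
    (linearIndependent_X_pow_smul_iff (R := ℚ) fun j => Pi.single j 1).mpr
      (Pi.linearIndependent_single_one J ℚ[X])
  exact (LinearIndependent.iff_fractionRing ℤ ℚ).mpr this

section DifferenceMonomial

variable {K : Type*} [Field K] [Algebra ℚ K] (σ : K →+* K) {n : ℕ} {y : Fin n → K}

def transformUnits (hy : TransformallyIndependent σ y) (p : Fin n × ℕ) : Kˣ :=
  Units.mk0 ((σ ^ p.2) (y p.1)) (AlgebraicIndependent.ne_zero hy p)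

noncomputable def transformExponent (d : Fin n → ℕ → ℤ) (s l : ℕ) :
    (Fin n × ℕ) →₀ ℤ :=
  ∑ j, ∑ k ∈ Finset.range (s + 1), Finsupp.single (j, l + k) (d j k)

lemma pow_apply_prod_eq_laurentMonomial (hy : TransformallyIndependent σ y)
    (d : Fin n → ℕ → ℤ) (s l : ℕ) :
    (σ ^ l) (∏ j, ∏ k ∈ Finset.range (s + 1), ((σ ^ k) (y j)) ^ (d j k)) =
      laurentMonomial (transformUnits σ hy) (transformExponent d s l) := by
  simp [transformExponent, laurentMonomial_sum, transformUnits, map_prod, map_zpow₀, pow_add]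

lemma symbolicSupport_transformExponent (d : Fin n → ℕ → ℤ) (s l : ℕ) :
    symbolicSupport (Fin n) (transformExponent d s l) =
      (X ^ l : ℚ[X]) • fun j => ∑ k ∈ Finset.range (s + 1), C (d j k : ℚ) * X ^ k := by
  ext j : 1
  simp [transformExponent, symbolicSupport, Finset.mul_sum, pow_add, Pi.single_apply]
  exact Finset.sum_congr rfl fun k _ => by ring

end DifferenceMonomial

theorem transformallyIndependent_iff_linearIndependent_symbolicSupport
    {K : Type*} [Field K] [Algebra ℚ K] (σ : K →+* K) {n : ℕ} {y : Fin n → K}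
    (hy : TransformallyIndependent σ y) {ι : Type*} (d : ι → Fin n → ℕ → ℤ) (s : ℕ)
    (B : ι → K)
    (hB : ∀ i, B i = ∏ j, ∏ k ∈ Finset.range (s + 1), ((σ ^ k) (y j)) ^ (d i j k))
    (M : ι → Fin n → ℚ[X])
    (hM : ∀ i j, M i j = ∑ k ∈ Finset.range (s + 1), C (d i j k : ℚ) * X ^ k) :
    TransformallyIndependent σ B ↔
      LinearIndependent (RatFunc ℚ) fun i j => algebraMap ℚ[X] (RatFunc ℚ) (M i j) := by
  have hσB : (fun p : ι × ℕ => (σ ^ p.2) (B p.1)) = fun p =>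
      ((laurentMonomial (transformUnits σ hy) (transformExponent (d p.1) s p.2) : Kˣ) : K) := by
    ext p
    rw [hB, pow_apply_prod_eq_laurentMonomial]
  have hsupp : symbolicSupport (Fin n) ∘ (fun p : ι × ℕ => transformExponent (d p.1) s p.2) =
      fun p => (X ^ p.2 : ℚ[X]) • M p.1 := by
    ext p : 1
    rw [Function.comp_apply, symbolicSupport_transformExponent]
    exact congrArg _ (funext fun j => (hM p.1 j).symm)
  let toRatFunc : (Fin n → ℚ[X]) →ₗ[ℚ[X]] (Fin n → RatFunc ℚ) :=
    (Algebra.linearMap ℚ[X] (RatFunc ℚ)).compLeft (Fin n)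
  have htoRatFunc : Function.Injective toRatFunc :=
    (IsFractionRing.injective ℚ[X] (RatFunc ℚ)).comp_left
  rw [TransformallyIndependent, hσB,
    algebraicIndependent_laurentMonomial_iff (u := transformUnits σ hy) hy,
    ← (symbolicSupport (Fin n)).linearIndependent_iff_of_injOn
      (symbolicSupport_injective (Fin n)).injOn, hsupp,
    LinearIndependent.iff_fractionRing ℤ ℚ, linearIndependent_X_pow_smul_iff,
    ← toRatFunc.linearIndependent_iff_of_injOn htoRatFunc.injOn,
    LinearIndependent.iff_fractionRing ℚ[X] (RatFunc ℚ)]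
  rfl

theorem stmt_0_general {K : Type*} [Field K] [Algebra ℚ K] (σ : K →+* K)
    (n m s : ℕ) (y : Fin n → K)
    (hy : TransformallyIndependent σ y)
    (d : Fin m → Fin n → ℕ → ℤ)
    (B : Fin m → K)
    (hB : ∀ i, B i = ∏ j : Fin n, ∏ k ∈ Finset.range (s + 1), ((σ ^ k) (y j)) ^ (d i j k))
    (M : Matrix (Fin m) (Fin n) (Polynomial ℚ))
    (hM : ∀ i j, M i j = ∑ k ∈ Finset.range (s + 1),
      Polynomial.C ((d i j k : ℚ)) * Polynomial.X ^ k) :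
    dtrdeg σ B = (M.map (algebraMap (Polynomial ℚ) (RatFunc ℚ))).rank := by
  rw [dtrdeg, Matrix.rank_eq_sSup_card_linearIndependent_rows]
  congr! 1
  ext k
  refine exists_congr fun S => and_congr_right fun _ => ?_
  exact transformallyIndependent_iff_linearIndependent_symbolicSupport σ hy (fun i : S => d i) s
    (fun i : S => B i) (fun i => hB i) (fun i : S => M i) (fun i => hM i)

/-- for Laurent difference monomials `B i = ∏_{j,k} (σ^k y_j)^(d i j k)` in
difference indeterminates `y₁,…,yₙ`, the difference transcendence degree of
`ℚ⟨B₁,…,B_m⟩` over `ℚ` equals the rank over `ℚ(x)` of the symbolic support matrix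
`M i j = ∑_k d i j k · x^k`. -/
theorem stmt_0 {K : Type*} [Field K] [Algebra ℚ K] (σ : K →+* K)
    (hσ : Function.Injective σ)
    (n m s : ℕ) (y : Fin n → K)
    (hy : TransformallyIndependent σ y)
    (d : Fin m → Fin n → ℕ → ℤ)
    (B : Fin m → K)
    (hB : ∀ i, B i = ∏ j : Fin n, ∏ k ∈ Finset.range (s + 1), ((σ ^ k) (y j)) ^ (d i j k))
    (M : Matrix (Fin m) (Fin n) (Polynomial ℚ))
    (hM : ∀ i j, M i j = ∑ k ∈ Finset.range (s + 1),
      Polynomial.C ((d i j k : ℚ)) * Polynomial.X ^ k) :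
    dtrdeg σ B = (M.map (algebraMap (Polynomial ℚ) (RatFunc ℚ))).rank :=
  stmt_0_general σ n m s y hy d B hB M hM
end

section
/- Let B_1 = y_1 y_2 and B_2 = (σ^a y_1)(σ^b y_2) be Laurent difference monomials in two difference indeterminates y_1, y_2 over ℚ. Then B_1 and B_2 are transformally independent over ℚ if and only if a ≠ b. -/
open MvPolynomial Finsupp Filter

theorem MvPolynomial.algebraicIndependent_monomial {R α β : Type*} [CommRing R]
    {e : α → β →₀ ℕ} (he : LinearIndependent ℕ e) :
    AlgebraicIndependent R fun i => monomial (e i) (1 : R) := by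
  have h : aeval (R := R) (fun i => monomial (e i) (1 : R)) =
      AddMonoidAlgebra.mapDomainAlgHom R R (linearCombination ℕ e).toAddMonoidHom := by
    refine MvPolynomial.algHom_ext fun i => ?_
    rw [aeval_X, AddMonoidAlgebra.mapDomainAlgHom_apply, X, ← single_eq_monomial,
      ← single_eq_monomial, AddMonoidAlgebra.mapDomain_single]
    simp
  change Function.Injective (aeval _)
  rw [h]
  exact AddMonoidAlgebra.mapDomain_injective he

theorem Finsupp.linearCombination_apply_of_forall_eq_ite {α β : Type*} [DecidableEq α]
    {e : α → β →₀ ℕ} {q : β} {s : Finset α} (h : ∀ p, e p q = if p ∈ s then 1 else 0)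
    (d : α →₀ ℕ) : linearCombination ℕ e d q = ∑ p ∈ s, d p := by
  induction d using Finsupp.induction_linear with
  | zero => simp
  | add d d' hd hd' => simp [hd, hd', Finset.sum_add_distrib]
  | single p n => simp [h, single_apply]

theorem Finsupp.eventually_apply_mk_eq_zero {α M : Type*} [Zero M] (d : α × ℕ →₀ M) (i : α) :
    ∀ᶠ k in atTop, d (i, k) = 0 := by
  rw [← Nat.cofinite_eq_atTop, eventually_cofinite]
  simpa only [Set.preimage, Finset.mem_coe, Finsupp.mem_support_iff] using
    d.support.finite_toSet.preimage (Prod.mk_right_injective i).injOn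

theorem Function.Periodic.eq_of_eventuallyEq {α : Type*} {f g : ℕ → α} {c : ℕ}
    (hf : Periodic f c) (hg : Periodic g c) (hc : 0 < c) (h : f =ᶠ[atTop] g) : f = g := by
  obtain ⟨N, hN⟩ := h.exists_forall_of_atTop
  funext k
  rw [← hf.nat_mul N k, ← hg.nat_mul N k]
  exact hN _ (le_add_left (Nat.le_mul_of_pos_right N hc))

/-- The exponent vector of `σᵏ B₁` (at `p = (0, k)`) and of `σᵏ B₂` (at `p = (1, k)`) in the
variables `(i, m) ↦ σᵐ (y i)`. -/
noncomputable def monomialExponent (a b : ℕ) : Fin 2 × ℕ → Fin 2 × ℕ →₀ ℕ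
  | (0, k) => single (0, k) 1 + single (1, k) 1
  | (1, k) => single (0, k + a) 1 + single (1, k + b) 1

theorem linearIndependent_monomialExponent {a b : ℕ} (hba : b < a) :
    LinearIndependent ℕ (monomialExponent a b) := by
  intro d d' h
  set φ := linearCombination ℕ (monomialExponent a b)
  have hφ_low (d) {k} (hk : k < a) : φ d (0, k) = d (0, k) := by
    rw [linearCombination_apply_of_forall_eq_ite (s := {(0, k)}), Finset.sum_singleton]
    rintro ⟨j, m⟩
    fin_cases j <;> simp [monomialExponent, single_apply]
    omega
  have hφ₀ (d k) : φ d (0, k + a) = d (0, k + a) + d (1, k) := by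
    rw [linearCombination_apply_of_forall_eq_ite (s := {(0, k + a), (1, k)}),
      Finset.sum_pair (by simp)]
    rintro ⟨j, m⟩
    fin_cases j <;> simp [monomialExponent, single_apply]
  have hφ₁ (d k) : φ d (1, k + a) = d (0, k + a) + d (1, k + (a - b)) := by
    rw [linearCombination_apply_of_forall_eq_ite (s := {(0, k + a), (1, k + (a - b))}),
      Finset.sum_pair (by simp)]
    rintro ⟨j, m⟩
    fin_cases j <;> simp [monomialExponent, single_apply]
    split_ifs <;> omega
  have h₁ : ∀ k, d (1, k) = d' (1, k) := by
    have hper : (fun k => (d (1, k) : ℤ) - d' (1, k)) = fun _ => 0 := by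
      refine Function.Periodic.eq_of_eventuallyEq (c := a - b) (fun k => ?_) (fun _ => rfl)
        (by omega) ?_
      · have := hφ₀ d k; have := hφ₀ d' k; have := hφ₁ d k; have := hφ₁ d' k
        simp only [h] at *
        omega
      · filter_upwards [d.eventually_apply_mk_eq_zero 1, d'.eventually_apply_mk_eq_zero 1]
          with k hk hk'
        simp [hk, hk']
    intro k
    have := congrFun hper k
    omega
  have h₀ : ∀ k, d (0, k) = d' (0, k) := by
    intro k
    rcases lt_or_ge k a with hk | hk
    · rw [← hφ_low d hk, ← hφ_low d' hk, h]
    · obtain ⟨m, rfl⟩ := Nat.exists_eq_add_of_le' hk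
      have := hφ₀ d m; have := hφ₀ d' m
      simp only [h, h₁] at *
      omega
  ext ⟨j, k⟩
  fin_cases j
  exacts [h₀ k, h₁ k]

section Difference

variable {K : Type*} [Field K] [Algebra ℚ K] {σ : K →+* K}

theorem TransformallyIndependent.comp {ι ι' : Type*} {y : ι → K}
    (hy : TransformallyIndependent σ y) {f : ι' → ι} (hf : Function.Injective f) :
    TransformallyIndependent σ (y ∘ f) :=
  AlgebraicIndependent.comp hy (Prod.map f id) (hf.prodMap Function.injective_id)

theorem aeval_monomial_monomialExponent (y : Fin 2 → K) (a b : ℕ) (p : Fin 2 × ℕ) :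
    aeval (fun q : Fin 2 × ℕ => (σ ^ q.2) (y q.1)) (monomial (monomialExponent a b p) (1 : ℚ)) =
      (σ ^ p.2) (![y 0 * y 1, (σ ^ a) (y 0) * (σ ^ b) (y 1)] p.1) := by
  have hX (i i' : Fin 2 × ℕ) : monomial (single i 1 + single i' 1) (1 : ℚ) = X i * X i' := by
    rw [X, X, monomial_mul, one_mul]
  obtain ⟨j, k⟩ := p
  fin_cases j <;> simp [monomialExponent, hX, Function.iterate_add_apply]

theorem transformallyIndependent_of_lt {y : Fin 2 → K} (hy : TransformallyIndependent σ y)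
    {a b : ℕ} (hba : b < a) :
    TransformallyIndependent σ ![y 0 * y 1, (σ ^ a) (y 0) * (σ ^ b) (y 1)] := by
  have := (algebraicIndependent_monomial (R := ℚ)
    (linearIndependent_monomialExponent hba)).map' (f := aeval _) hy
  simpa only [TransformallyIndependent, Function.comp_def, aeval_monomial_monomialExponent] using
    this

end Difference

theorem stmt_2_general {K : Type*} [Field K] [Algebra ℚ K] (σ : K →+* K)
    (y : Fin 2 → K) (hy : TransformallyIndependent σ y)
    (a b : ℕ) :
    TransformallyIndependent σ
        ![y 0 * y 1, (σ ^ a) (y 0) * (σ ^ b) (y 1)] ↔ a ≠ b := by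
  refine ⟨?_, fun hab => ?_⟩
  · rintro h rfl
    have hcollide : ((1 : Fin 2), 0) = ((0 : Fin 2), a) := h.injective (by simp [map_mul])
    simp at hcollide
  · rcases hab.lt_or_gt with hab | hba
    · have := transformallyIndependent_of_lt (hy.comp (Equiv.swap (0 : Fin 2) 1).injective) hab
      simp only [Function.comp_apply, Equiv.swap_apply_left, Equiv.swap_apply_right] at this
      rwa [mul_comm (y 1), mul_comm ((σ ^ b) _)] at this
    · exact transformallyIndependent_of_lt hy hba

/-- for difference indeterminates `y₁, y₂` over `ℚ`, the Laurent difference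
monomials `B₁ = y₁ y₂` and `B₂ = (σ^a y₁)(σ^b y₂)` are transformally independent over `ℚ`
if and only if `a ≠ b`. -/
theorem stmt_2 {K : Type*} [Field K] [Algebra ℚ K] (σ : K →+* K)
    (hσ : Function.Injective σ)
    (y : Fin 2 → K) (hy : TransformallyIndependent σ y)
    (a b : ℕ) :
    TransformallyIndependent σ
        ![y 0 * y 1, (σ ^ a) (y 0) * (σ ^ b) (y 1)] ↔ a ≠ b :=
  stmt_2_general σ y hy a b
end

section
/- Let P_i(u, Y) ∈ F⟨Y⟩{u} for i = 1, ..., m, where u and Y = (y_1, ..., y_n) are difference indeterminates over the difference field F. If P_1(u,Y), ..., P_m(u,Y) are transformally dependent over F⟨u⟩, then for any specialization of u to an element ū ∈ F, the polynomials P_1(ū,Y), ..., P_m(ū,Y) are transformally dependent over F. -/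
/-!
Clearing denominators, a transformal dependence of the `P_i(u, Y)` over `F⟨u⟩` is an
algebraic relation among the transforms `σ^k P_i(u, Y)` with coefficients in `F[u, σu, …]`.
As `u` and `Y` are transformally independent, it is a relation among the polynomials `σ^k P_i`
themselves, i.e. a linear dependence over the domain `F[u, σu, …]` of finitely many monomials
in them. Linear dependence over a domain survives every ring homomorphism to a field, because
a nonvanishing maximal minor of the image would lift to one of the original. Specialising
`σ^j u ↦ σ^j ū` therefore yields a nontrivial relation over `F` among the `σ^k P_i(ū, Y)`.
-/

open MvPolynomial

namespace Matrix

variable {m n : Type*} [Fintype m] [DecidableEq m] [Fintype n]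

theorem exists_det_submatrix_ne_zero_of_linearIndependent_row {K : Type*} [Field K]
    {M : Matrix m n K} (hM : LinearIndependent K M.row) :
    ∃ f : m → n, (M.submatrix id f).det ≠ 0 := by
  have hspan : Submodule.span K (Set.range M.col) = ⊤ := by
    apply Submodule.eq_top_of_finrank_eq
    rw [← rank_eq_finrank_span_cols, rank_eq_finrank_span_row, finrank_span_eq_card hM,
      Module.finrank_fintype_fun_eq_card]
  obtain ⟨κ, a, -, hspan_a, hli⟩ := exists_linearIndependent' K M.col
  let b := Module.Basis.mk hli (by rw [hspan_a, hspan])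
  let e := b.indexEquiv (Pi.basisFun K m)
  refine ⟨a ∘ e.symm, ?_⟩
  rw [← isUnit_iff_ne_zero, ← isUnit_iff_isUnit_det, ← linearIndependent_cols_iff_isUnit]
  exact hli.comp e.symm e.symm.injective

theorem not_linearIndependent_row_map {R F : Type*} [CommRing R] [IsDomain R] [Field F]
    (e : R →+* F) {M : Matrix m n R} (hM : ¬ LinearIndependent R M.row) :
    ¬ LinearIndependent F (M.map e).row := by
  intro hMe
  obtain ⟨f, hf⟩ := exists_det_submatrix_ne_zero_of_linearIndependent_row hMe
  obtain ⟨c, hc, i, hi⟩ := Fintype.not_linearIndependent_iff.mp hM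
  have hdet : (M.submatrix id f).det = 0 := by
    refine exists_vecMul_eq_zero_iff.mp ⟨c, fun h => hi (congrFun h i), funext fun j => ?_⟩
    simpa [vecMul, dotProduct, mul_comm] using congrFun hc (f j)
  rw [submatrix_map, ← RingHom.mapMatrix_apply, ← RingHom.map_det, hdet, map_zero] at hf
  exact hf rfl

end Matrix

namespace MvPolynomial

variable {R F : Type*} [CommRing R] [Field F] (e : R →+* F)

theorem sum_coeff_smul_aeval_monomial {J σ : Type*} (g : J → MvPolynomial σ R)
    (S : MvPolynomial J R) :
    ∑ α : S.support, coeff α S • aeval g (monomial α (1 : R)) = aeval g S := by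
  conv_rhs => rw [S.as_sum, map_sum, ← Finset.sum_coe_sort]
  refine Finset.sum_congr rfl fun α _ => ?_
  rw [← map_smul, smul_monomial, smul_eq_mul, mul_one]

theorem map_aeval_monomial_one {J σ : Type*} (g : J → MvPolynomial σ R) (α : J →₀ ℕ) :
    map e (aeval g (monomial α (1 : R))) = aeval (fun j => map e (g j)) (monomial α (1 : F)) := by
  simp only [aeval_monomial, map_one, one_mul, map_finsuppProd, map_pow]

theorem not_linearIndependent_map [IsDomain R] {ι σ : Type*} [Fintype ι]
    {v : ι → MvPolynomial σ R}
    (hv : ¬ LinearIndependent R v) : ¬ LinearIndependent F (fun i => map e (v i)) := by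
  classical
  let B := Finset.univ.biUnion fun i => (v i).support
  let M : Matrix ι B R := Matrix.of fun i β => coeff β (v i)
  have hM : ¬ LinearIndependent R M.row := by
    obtain ⟨c, hc, hc0⟩ := Fintype.not_linearIndependent_iff.mp hv
    refine Fintype.not_linearIndependent_iff.mpr ⟨c, ?_, hc0⟩
    ext β
    simpa [M, Matrix.row, coeff_sum] using congrArg (coeff β) hc
  obtain ⟨d, hd, hd0⟩ :=
    Fintype.not_linearIndependent_iff.mp (Matrix.not_linearIndependent_row_map e hM)
  refine Fintype.not_linearIndependent_iff.mpr ⟨d, MvPolynomial.ext _ _ fun β => ?_, hd0⟩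
  by_cases hβ : β ∈ B
  · simpa [M, Matrix.row, coeff_sum, coeff_map] using congrFun hd ⟨β, hβ⟩
  · have hzero : ∀ i, coeff β (v i) = 0 := fun i =>
      notMem_support_iff.mp fun h => hβ (Finset.mem_biUnion.mpr ⟨i, Finset.mem_univ _, h⟩)
    simp [coeff_sum, coeff_map, hzero]

theorem not_algebraicIndependent_map [IsDomain R] {J σ : Type*} {g : J → MvPolynomial σ R}
    (hg : ¬ AlgebraicIndependent R g) :
    ¬ AlgebraicIndependent F (fun j => map e (g j)) := by
  classical
  simp only [algebraicIndependent_iff, not_forall, exists_prop] at hg ⊢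
  obtain ⟨S, hS, hS0⟩ := hg
  have hdepR : ¬ LinearIndependent R fun α : S.support => aeval g (monomial α (1 : R)) := by
    obtain ⟨α, hα⟩ := support_nonempty.mpr hS0
    exact Fintype.not_linearIndependent_iff.mpr ⟨fun α => coeff α S,
      by rw [sum_coeff_smul_aeval_monomial, hS], ⟨α, hα⟩, mem_support_iff.mp hα⟩
  obtain ⟨d, hd, α₀, hα₀⟩ :=
    Fintype.not_linearIndependent_iff.mp (not_linearIndependent_map e hdepR)
  refine ⟨∑ α : S.support, monomial α (d α), ?_, fun h => hα₀ ?_⟩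
  · simp only [map_aeval_monomial_one] at hd
    rw [← hd, map_sum]
    refine Finset.sum_congr rfl fun α _ => ?_
    rw [← map_smul, smul_monomial, smul_eq_mul, mul_one]
  · simpa [coeff_sum, coeff_monomial] using congrArg (coeff α₀) h

end MvPolynomial

theorem AlgebraicIndependent.not_algebraicIndependent_specialize {F K ι κ J : Type*} [Field F]
    [Field K] [Algebra F K] {x : ι → K} {y : κ → K}
    (hxy : AlgebraicIndependent F (Sum.elim x y))
    (f : J → MvPolynomial (ι ⊕ κ) F)
    (hdep : ¬ AlgebraicIndependent (IntermediateField.adjoin F (Set.range x))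
      (fun j => aeval (Sum.elim x y) (f j)))
    (a : ι → F) :
    ¬ AlgebraicIndependent F
      (fun j => aeval (Sum.elim (fun i => algebraMap F K (a i)) y) (f j)) := by
  obtain ⟨hx, hy⟩ := AlgebraicIndependent.sumElim_iff.mp
    (Sum.elim_swap (f := x) (g := y) ▸ hxy.comp Sum.swap Sum.swap_leftInverse.injective)
  set R := Algebra.adjoin F (Set.range x)
  let xR : ι → R := fun i => ⟨x i, Algebra.subset_adjoin ⟨i, rfl⟩⟩
  let ev : R →ₐ[F] F := (aeval a).comp hx.aevalEquiv.symm.toAlgHom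
  have hev : ∀ i, ev (xR i) = a i := fun i => by
    have : hx.aevalEquiv (X i) = xR i := Subtype.ext (by simp [xR])
    simp [ev, ← this]
  let sp : MvPolynomial (ι ⊕ κ) F →ₐ[F] MvPolynomial κ R :=
    aeval (Sum.elim (fun i => C (xR i)) X)
  have hsp : ((aeval y).restrictScalars F).comp sp = aeval (Sum.elim x y) :=
    algHom_ext (by rintro (i | k) <;> simp [sp, xR])
  have hsp_spec : ((aeval y).comp (mapAlgHom ev)).comp sp =
      aeval (Sum.elim (fun i => algebraMap F K (a i)) y) :=
    algHom_ext (by rintro (i | k) <;> simp [sp, hev])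
  have hdepR : ¬ AlgebraicIndependent R (fun j => sp (f j)) := fun h => by
    refine hdep (IntermediateField.algebraicIndependent_adjoin_iff.mpr ?_)
    convert h.map' (algebraicIndependent_iff_injective_aeval.mp hy) using 1
    funext j
    exact (DFunLike.congr_fun hsp (f j)).symm
  refine fun h => MvPolynomial.not_algebraicIndependent_map ev.toRingHom hdepR
    (AlgebraicIndependent.of_comp (aeval y) ?_)
  convert h using 1
  funext j
  exact DFunLike.congr_fun hsp_spec (f j)

theorem aeval_rename_map_restrict {K ι : Type*} [Field K] {F : Subfield K}
    (φ : K →+* K) (hφ : ∀ a ∈ F, φ a ∈ F) {w : ι → K} {s : ι → ι}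
    (hw : ∀ i, φ (w i) = w (s i))
    (Q : MvPolynomial ι F) :
    aeval w (rename s (map (φ.restrict F F hφ) Q)) = φ (aeval w Q) := by
  rw [aeval_rename, MvPolynomial.map_aeval, aeval_def, eval₂_map]
  congr 1
  exact funext fun i => (hw i).symm

section Difference

variable {K : Type*} [Field K] (σ : K →+* K) {F : Subfield K} (hF : ∀ a ∈ F, σ a ∈ F)

include hF in
theorem Subfield.pow_apply_mem_of_apply_mem (k : ℕ) {a : K} (ha : a ∈ F) :
    (σ ^ k) a ∈ F := by
  rw [RingHom.coe_pow]
  exact Set.MapsTo.iterate hF k ha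

/-- The difference polynomial `σ^k Q`, in the variables `Sum.inl j ↦ σ^j u`,
`Sum.inr (i, j) ↦ σ^j yᵢ`. -/
noncomputable def transformPoly (n k : ℕ) (Q : MvPolynomial (ℕ ⊕ (Fin n × ℕ)) F) :
    MvPolynomial (ℕ ⊕ (Fin n × ℕ)) F :=
  rename (Sum.map (k + ·) (Prod.map id (k + ·)))
    (map ((σ ^ k).restrict F F fun _ => Subfield.pow_apply_mem_of_apply_mem σ hF k) Q)

theorem aeval_transformPoly {n : ℕ} (t : K) (Y : Fin n → K) (k : ℕ)
    (Q : MvPolynomial (ℕ ⊕ (Fin n × ℕ)) F) :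
    aeval (Sum.elim (fun j => (σ ^ j) t) fun q : Fin n × ℕ => (σ ^ q.2) (Y q.1))
        (transformPoly σ hF n k Q) =
      (σ ^ k)
        (aeval (Sum.elim (fun j => (σ ^ j) t) fun q : Fin n × ℕ => (σ ^ q.2) (Y q.1)) Q) := by
  refine aeval_rename_map_restrict _ _ ?_ Q
  rintro (j | ⟨l, j⟩) <;> simp [Function.iterate_add_apply]

end Difference

theorem stmt_6_general {K : Type*} [Field K] (σ : K →+* K)
    (F : Subfield K)
    (hFσ : ∀ a ∈ F, σ a ∈ F)
    (n m : ℕ) (u : K) (Y : Fin n → K)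
    -- `u` and `Y` are difference indeterminates over `F`:
    (hind : AlgebraicIndependent F
      (fun p : (Unit ⊕ Fin n) × ℕ =>
        (σ ^ p.2) (Sum.elim (fun _ => u) Y p.1)))
    (P : Fin m → MvPolynomial (ℕ ⊕ (Fin n × ℕ)) F)
    -- the values `P_i(u, Y)`:
    (pval : Fin m → K)
    (hpval : ∀ i, pval i =
      aeval (Sum.elim (fun k => (σ ^ k) u) (fun q : Fin n × ℕ => (σ ^ q.2) (Y q.1))) (P i))
    -- `P₁(u,Y),…,P_m(u,Y)` are transformally dependent over `F⟨u⟩`: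
    (hdep : ¬ AlgebraicIndependent
      (Subfield.closure ((F : Set K) ∪ Set.range (fun k : ℕ => (σ ^ k) u)))
      (fun p : Fin m × ℕ => (σ ^ p.2) (pval p.1)))
    -- a difference specialization of `u` to `ū ∈ F`:
    (ub : K) (hub : ub ∈ F)
    -- the specialized values `P_i(ū, Y)`:
    (qval : Fin m → K)
    (hqval : ∀ i, qval i =
      aeval (Sum.elim (fun k => (σ ^ k) ub) (fun q : Fin n × ℕ => (σ ^ q.2) (Y q.1))) (P i)) :
    ¬ AlgebraicIndependent F (fun p : Fin m × ℕ => (σ ^ p.2) (qval p.1)) := by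
  set yv : Fin n × ℕ → K := fun q => (σ ^ q.2) (Y q.1)
  let f : Fin m × ℕ → MvPolynomial (ℕ ⊕ (Fin n × ℕ)) F :=
    fun p => transformPoly σ hFσ n p.2 (P p.1)
  have htransforms : ∀ (t : K) (val : Fin m → K),
      (∀ i, val i = aeval (Sum.elim (fun k => (σ ^ k) t) yv) (P i)) →
      (fun p : Fin m × ℕ => (σ ^ p.2) (val p.1)) =
        fun p => aeval (Sum.elim (fun k => (σ ^ k) t) yv) (f p) :=
    fun t val hval => funext fun p => by rw [hval, aeval_transformPoly]
  let reindex : ℕ ⊕ (Fin n × ℕ) ≃ (Unit ⊕ Fin n) × ℕ :=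
    ((Equiv.punitProd ℕ).symm.sumCongr (Equiv.refl _)).trans (Equiv.sumProdDistrib _ _ _).symm
  have hind' : AlgebraicIndependent F (Sum.elim (fun k => (σ ^ k) u) yv) := by
    convert hind.comp reindex reindex.injective using 1
    funext i; rcases i with k | q <;> rfl
  have hclosure : (IntermediateField.adjoin F (Set.range fun k => (σ ^ k) u)).toSubfield =
      Subfield.closure ((F : Set K) ∪ Set.range fun k => (σ ^ k) u) := by
    rw [IntermediateField.adjoin_toSubfield]
    congr
    exact Subtype.range_coe
  rw [← hclosure, htransforms u pval hpval] at hdep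
  rw [htransforms ub qval hqval]
  exact hind'.not_algebraicIndependent_specialize f hdep
    (fun k => ⟨(σ ^ k) ub, Subfield.pow_apply_mem_of_apply_mem σ hFσ k hub⟩)

/-- Let `F` be an inversive difference subfield of a difference field `(K, σ)`,
let `u ∈ K` and `Y = (y₁,…,yₙ)` be difference indeterminates over `F`, and let
`P₁,…,P_m` be difference polynomials in `u` over `F{Y}` (variables `Sum.inl k ↦ σ^k u`,
`Sum.inr (j,k) ↦ σ^k y_j`).  If the values `P_i(u, Y)` are transformally dependent over
`F⟨u⟩`, then for any difference specialization of `u` to `ū ∈ F`, the values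
`P_i(ū, Y)` are transformally dependent over `F`. -/
theorem stmt_6 {K : Type*} [Field K] (σ : K →+* K) (hσ : Function.Injective σ)
    (F : Subfield K)
    (hFσ : ∀ a ∈ F, σ a ∈ F)
    (hFinv : ∀ a ∈ F, ∃ b ∈ F, σ b = a)
    (n m : ℕ) (u : K) (Y : Fin n → K)
    -- `u` and `Y` are difference indeterminates over `F`:
    (hind : AlgebraicIndependent F
      (fun p : (Unit ⊕ Fin n) × ℕ =>
        (σ ^ p.2) (Sum.elim (fun _ => u) Y p.1)))
    (P : Fin m → MvPolynomial (ℕ ⊕ (Fin n × ℕ)) F)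
    -- the values `P_i(u, Y)`:
    (pval : Fin m → K)
    (hpval : ∀ i, pval i =
      aeval (Sum.elim (fun k => (σ ^ k) u) (fun q : Fin n × ℕ => (σ ^ q.2) (Y q.1))) (P i))
    -- `P₁(u,Y),…,P_m(u,Y)` are transformally dependent over `F⟨u⟩`:
    (hdep : ¬ AlgebraicIndependent
      (Subfield.closure ((F : Set K) ∪ Set.range (fun k : ℕ => (σ ^ k) u)))
      (fun p : Fin m × ℕ => (σ ^ p.2) (pval p.1)))
    -- a difference specialization of `u` to `ū ∈ F`:
    (ub : K) (hub : ub ∈ F)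
    (hspec : ∀ Q : MvPolynomial ℕ F,
      aeval (fun k : ℕ => (σ ^ k) u) Q = 0 → aeval (fun k : ℕ => (σ ^ k) ub) Q = 0)
    -- the specialized values `P_i(ū, Y)`:
    (qval : Fin m → K)
    (hqval : ∀ i, qval i =
      aeval (Sum.elim (fun k => (σ ^ k) ub) (fun q : Fin n × ℕ => (σ ^ q.2) (Y q.1))) (P i)) :
    ¬ AlgebraicIndependent F (fun p : Fin m × ℕ => (σ ^ p.2) (qval p.1)) :=
  stmt_6_general σ F hFσ n m u Y hind P pval hpval hdep ub hub qval hqval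
end

section
/- A difference ideal I in the difference polynomial ring F{y_1,...,y_n} possesses a generic zero if and only if I is a reflexive prime difference ideal other than the unit ideal. -/
/-!
If `η` is a generic zero of `I`, then `I` is the kernel of evaluation at the orbit of `η`, a
homomorphism into a field, so `I` is prime; evaluation intertwines `shiftOp` with the injective
`σK`, so `I` is reflexive. Conversely, for a reflexive prime difference ideal `I`, `shiftOp`
descends to an injective endomorphism of the domain `F{y}/I`, which extends to its fraction
field; there the residue classes of the `y_j` form a generic zero.
-/

open MvPolynomial

universe u

/-- A difference field extension of the difference field `(F, σF)`. -/
structure DiffFieldExt (F : Type u) [Field F] (σF : F →+* F) : Type (u + 1) where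
  K : Type u
  [fieldK : Field K]
  [algFK : Algebra F K]
  σK : K →+* K
  inj : Function.Injective σK
  compat : ∀ a : F, σK (algebraMap F K a) = algebraMap F K (σF a)

attribute [instance] DiffFieldExt.fieldK DiffFieldExt.algFK

/-- The transforming operator on the difference polynomial ring `F{y₁,…,yₙ}`
(variables `(j, k) ↦ σ^k y_j`): apply `σF` to coefficients and shift the order. -/
noncomputable def shiftOp (F : Type u) [Field F] (σF : F →+* F) (n : ℕ) :
    MvPolynomial (Fin n × ℕ) F →+* MvPolynomial (Fin n × ℕ) F :=
  (MvPolynomial.rename (fun p : Fin n × ℕ => (p.1, p.2 + 1))).toRingHom.comp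
    (MvPolynomial.map σF)

theorem Ideal.isPrime_of_forall_eq_zero_iff_mem {A B : Type*} [CommRing A] [CommRing B]
    [IsDomain B] (φ : A →+* B) {I : Ideal A} (h : ∀ a, φ a = 0 ↔ a ∈ I) : I.IsPrime := by
  have hker : I = RingHom.ker φ := Ideal.ext fun a => (h a).symm.trans RingHom.mem_ker.symm
  exact hker ▸ RingHom.ker_isPrime φ

namespace DiffFieldExt

variable {F : Type u} [Field F] {σF : F →+* F}

-- An `abbrev`, so that instances on `FractionRing R` are found for its field `K`.
noncomputable abbrev ofFractionRing (R : Type u) [CommRing R] [IsDomain R] [Algebra F R]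
    (σ : R →+* R) (hσ : Function.Injective σ)
    (compat : ∀ a, σ (algebraMap F R a) = algebraMap F R (σF a)) : DiffFieldExt F σF where
  K := FractionRing R
  σK := IsFractionRing.lift (g := (algebraMap R (FractionRing R)).comp σ)
    ((IsFractionRing.injective R _).comp hσ)
  inj := RingHom.injective _
  compat a := by
    rw [IsScalarTower.algebraMap_apply F R, IsFractionRing.lift_algebraMap, RingHom.comp_apply,
      compat, ← IsScalarTower.algebraMap_apply]

theorem ofFractionRing_σK_algebraMap {R : Type u} [CommRing R] [IsDomain R] [Algebra F R]
    {σ : R →+* R} {hσ : Function.Injective σ}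
    {compat : ∀ a, σ (algebraMap F R a) = algebraMap F R (σF a)} (x : R) :
    (ofFractionRing R σ hσ compat).σK (algebraMap R (FractionRing R) x) =
      algebraMap R (FractionRing R) (σ x) := by
  have hg : Function.Injective ((algebraMap R (FractionRing R)).comp σ) :=
    (IsFractionRing.injective R _).comp hσ
  exact IsFractionRing.lift_algebraMap (K := FractionRing R) hg x

end DiffFieldExt

section

variable {F : Type u} [Field F] {σF : F →+* F} {n : ℕ}

theorem shiftOp_C (a : F) : shiftOp F σF n (C a) = C (σF a) := by
  simp [shiftOp]

theorem shiftOp_X (j : Fin n) (k : ℕ) : shiftOp F σF n (X (j, k)) = X (j, k + 1) := by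
  simp [shiftOp]

theorem aeval_shiftOp {K : Type*} [CommSemiring K] [Algebra F K] (σ : K →+* K)
    (hσ : ∀ a, σ (algebraMap F K a) = algebraMap F K (σF a)) (η : Fin n → K)
    (p : MvPolynomial (Fin n × ℕ) F) :
    aeval (fun q : Fin n × ℕ => (σ ^ q.2) (η q.1)) (shiftOp F σF n p) =
      σ (aeval (fun q : Fin n × ℕ => (σ ^ q.2) (η q.1)) p) := by
  have hcomp : σ.comp (algebraMap F K) = (algebraMap F K).comp σF := RingHom.ext hσ
  rw [map_aeval, shiftOp, RingHom.comp_apply, AlgHom.toRingHom_eq_coe, RingHom.coe_coe,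
    aeval_rename, aeval_def, eval₂_map, coe_eval₂Hom, hcomp]
  congr 1
  funext q
  rw [Function.comp_apply, pow_succ']
  rfl

theorem aeval_orbit_eq_of_intertwines {K : Type*} [CommSemiring K] [Algebra F K] (τ : K →+* K)
    (φ : MvPolynomial (Fin n × ℕ) F →ₐ[F] K) (hφ : ∀ p, φ (shiftOp F σF n p) = τ (φ p)) :
    aeval (fun q : Fin n × ℕ => (τ ^ q.2) (φ (X (q.1, 0)))) = φ := by
  refine algHom_ext fun ⟨j, k⟩ => ?_
  rw [aeval_X]
  induction k with
  | zero => rfl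
  | succ k ih => rw [pow_succ', RingHom.mul_def, RingHom.comp_apply, ih, ← hφ, shiftOp_X]

theorem mem_of_shiftOp_mem_of_generic_zero {I : Ideal (MvPolynomial (Fin n × ℕ) F)}
    (E : DiffFieldExt F σF) (η : Fin n → E.K)
    (h : ∀ P, aeval (fun q : Fin n × ℕ => (E.σK ^ q.2) (η q.1)) P = 0 ↔ P ∈ I)
    {p : MvPolynomial (Fin n × ℕ) F} (hp : shiftOp F σF n p ∈ I) : p ∈ I := by
  rw [← h, aeval_shiftOp E.σK E.compat, map_eq_zero_iff E.σK E.inj] at hp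
  exact (h p).mp hp

variable (I : Ideal (MvPolynomial (Fin n × ℕ) F))

theorem quotientMap_shiftOp_algebraMap (hdiff : I ≤ I.comap (shiftOp F σF n)) (a : F) :
    Ideal.quotientMap I (shiftOp F σF n) hdiff (algebraMap F _ a) = algebraMap F _ (σF a) := by
  rw [← Ideal.Quotient.mk_algebraMap, ← Ideal.Quotient.mk_algebraMap, Ideal.quotientMap_mk,
    MvPolynomial.algebraMap_eq, shiftOp_C]

noncomputable abbrev genericExt [I.IsPrime] (hdiff : I ≤ I.comap (shiftOp F σF n))
    (hrefl : I.comap (shiftOp F σF n) ≤ I) : DiffFieldExt F σF :=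
  DiffFieldExt.ofFractionRing (MvPolynomial (Fin n × ℕ) F ⧸ I)
    (Ideal.quotientMap I (shiftOp F σF n) hdiff) (Ideal.quotientMap_injective' hrefl)
    (quotientMap_shiftOp_algebraMap I hdiff)

theorem algebraMap_mk_shiftOp [I.IsPrime] (hdiff : I ≤ I.comap (shiftOp F σF n))
    (hrefl : I.comap (shiftOp F σF n) ≤ I) (p : MvPolynomial (Fin n × ℕ) F) :
    algebraMap _ (FractionRing (MvPolynomial (Fin n × ℕ) F ⧸ I))
        (Ideal.Quotient.mk I (shiftOp F σF n p)) =
      (genericExt I hdiff hrefl).σK (algebraMap _ _ (Ideal.Quotient.mk I p)) := by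
  rw [DiffFieldExt.ofFractionRing_σK_algebraMap, Ideal.quotientMap_mk]

end

theorem stmt_7_general {F : Type u} [Field F] (σF : F →+* F)
    (n : ℕ) (I : Ideal (MvPolynomial (Fin n × ℕ) F))
    (hdiff : ∀ p, p ∈ I → shiftOp F σF n p ∈ I) :
    (∃ (E : DiffFieldExt F σF) (η : Fin n → E.K),
        ∀ P : MvPolynomial (Fin n × ℕ) F,
          aeval (fun q : Fin n × ℕ => (E.σK ^ q.2) (η q.1)) P = 0 ↔ P ∈ I) ↔
      (I.IsPrime ∧ ∀ p, shiftOp F σF n p ∈ I → p ∈ I) := by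
  constructor
  · rintro ⟨E, η, h⟩
    exact ⟨Ideal.isPrime_of_forall_eq_zero_iff_mem (aeval _).toRingHom h,
      fun p => mem_of_shiftOp_mem_of_generic_zero E η h⟩
  · rintro ⟨hprime, hrefl⟩
    let R := MvPolynomial (Fin n × ℕ) F ⧸ I
    let φ : MvPolynomial (Fin n × ℕ) F →ₐ[F] FractionRing R :=
      (IsScalarTower.toAlgHom F R _).comp (Ideal.Quotient.mkₐ F I)
    let E := genericExt I hdiff hrefl
    refine ⟨E, fun j => φ (X (j, 0)), fun P => ?_⟩
    rw [aeval_orbit_eq_of_intertwines E.σK φ (algebraMap_mk_shiftOp I hdiff hrefl)]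
    exact (map_eq_zero_iff _ (IsFractionRing.injective R _)).trans Ideal.Quotient.eq_zero_iff_mem

/-- a difference ideal `I` of `F{y₁,…,yₙ}` possesses a generic zero iff `I`
is a reflexive prime difference ideal other than the unit ideal. -/
theorem stmt_7 {F : Type u} [Field F] (σF : F →+* F)
    (hinj : Function.Injective σF) (hinv : Function.Surjective σF)
    (n : ℕ) (I : Ideal (MvPolynomial (Fin n × ℕ) F))
    (hdiff : ∀ p, p ∈ I → shiftOp F σF n p ∈ I) :
    (∃ (E : DiffFieldExt F σF) (η : Fin n → E.K),
        ∀ P : MvPolynomial (Fin n × ℕ) F,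
          aeval (fun q : Fin n × ℕ => (E.σK ^ q.2) (η q.1)) P = 0 ↔ P ∈ I) ↔
      (I.IsPrime ∧ ∀ p, shiftOp F σF n p ∈ I → p ∈ I) :=
  stmt_7_general σF n I hdiff
end

section
/- Let B be a regular chain in the polynomial ring F[U, Y], let f ∈ F[U, Y], and let L ∈ F[U] be nonzero such that L·f lies in the ideal (B) generated by B. Then f lies in the algebraic saturation ideal asat(B) = (B) : I_B^∞, where I_B is the multiplicative set generated by the initials of the elements of B. -/
/-!
Pseudo-dividing `f` by `B_m, …, B_1` in turn, each `B_i` in its leading variable `y_i`, gives a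
product `h` of initials and a reduced `r` (`deg_{y_i} r < d_i` for every `i`) with
`h f ≡ r mod (B)`. Then `L r ∈ (B)`, and it remains to show `r = 0`.

For this pass to `K[Y]` with `K = Frac F[U]`: there `L` is a unit and, by regularity, every
initial is invertible modulo the earlier elements of the chain. A reduced element of `(B)` then
vanishes, by induction on `m`: modulo `J = (B_1, …, B_{m-1})` the initial of `B_m` is a unit, so
`B_m` is a unit times a monic polynomial of degree `d_m` in `y_m`. As `deg_{y_m} r < d_m`, every
`y_m`-coefficient of `r` lies in `J`, and these coefficients are reduced with respect to
`B_1, …, B_{m-1}`.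
-/

open MvPolynomial

namespace Polynomial

theorem eq_zero_of_mem_span_C_mul_X_pow_add {A : Type*} [CommRing A] {c : A} (hc : IsUnit c)
    {d : ℕ} {t p : A[X]} (ht : t.degree < d) (hmem : p ∈ Ideal.span {C c * X ^ d + t})
    (hp : p.degree < d) : p = 0 := by
  nontriviality A
  obtain ⟨u, rfl⟩ := hc
  have hlow : (C (↑u⁻¹ : A) * t).degree < (X ^ d : A[X]).degree :=
    ((degree_C_mul_of_isUnit u⁻¹.isUnit t).trans_lt ht).trans_eq (degree_X_pow d).symm
  have hM : (X ^ d + C (↑u⁻¹ : A) * t).Monic := monic_X_pow_add (by simpa using hlow)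
  have hg : C (u : A) * X ^ d + t = C (u : A) * (X ^ d + C (↑u⁻¹ : A) * t) := by
    rw [mul_add, ← mul_assoc, ← C_mul, Units.mul_inv, C_1, one_mul]
  by_contra hp0
  refine hM.not_dvd_of_degree_lt hp0 ?_
    (dvd_trans (Dvd.intro_left _ hg.symm) (Ideal.mem_span_singleton.mp hmem))
  rwa [degree_add_eq_left_of_degree_lt hlow, degree_X_pow]

end Polynomial

namespace MvPolynomial

section Degrees

variable {R : Type*} [CommRing R] {σ : Type*}

theorem degreeOf_X_pow_le (x : σ) (k : ℕ) : degreeOf x (X x ^ k : MvPolynomial σ R) ≤ k := by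
  refine degreeOf_le_iff.mpr fun μ hμ => ?_
  rw [X_pow_eq_monomial] at hμ
  obtain rfl := Finset.mem_singleton.mp (support_monomial_subset hμ)
  simp

theorem degreeOf_modMonomial_le (z : σ) (p : MvPolynomial σ R) (s : σ →₀ ℕ) :
    degreeOf z (p.modMonomial s) ≤ degreeOf z p := by
  classical
  refine degreeOf_le_iff.mpr fun μ hμ => monomial_le_degreeOf z ?_
  rw [mem_support_iff] at hμ ⊢
  by_cases hsμ : s ≤ μ
  · exact absurd (coeff_modMonomial_of_le p hsμ) hμ
  · rwa [coeff_modMonomial_of_not_le p hsμ] at hμ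

theorem degreeOf_modMonomial_single_lt (x : σ) (p : MvPolynomial σ R) {N : ℕ} (hN : 0 < N) :
    degreeOf x (p.modMonomial (Finsupp.single x N)) < N := by
  refine (degreeOf_lt_iff hN).mpr fun μ hμ => ?_
  by_contra! hle
  exact mem_support_iff.mp hμ (coeff_modMonomial_of_le p (Finsupp.single_le_iff.mpr hle))

theorem degreeOf_divMonomial_le (z : σ) (p : MvPolynomial σ R) (s : σ →₀ ℕ) :
    degreeOf z (p.divMonomial s) ≤ degreeOf z p - s z := by
  refine degreeOf_le_iff.mpr fun μ hμ => ?_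
  rw [mem_support_iff, coeff_divMonomial, ← mem_support_iff] at hμ
  have := monomial_le_degreeOf z hμ
  rw [Finsupp.add_apply] at this
  omega

theorem exists_eq_X_pow_mul_add (x : σ) (p : MvPolynomial σ R) {N : ℕ}
    (hN : degreeOf x p = N) (hN0 : 0 < N) :
    ∃ a b : MvPolynomial σ R, p = X x ^ N * a + b ∧ degreeOf x a = 0 ∧ degreeOf x b < N ∧
      ∀ z, z ≠ x → degreeOf z a ≤ degreeOf z p ∧ degreeOf z b ≤ degreeOf z p := by
  refine ⟨p.divMonomial (Finsupp.single x N), p.modMonomial (Finsupp.single x N), ?_, ?_,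
    degreeOf_modMonomial_single_lt x p hN0, fun z hz => ⟨?_, degreeOf_modMonomial_le z p _⟩⟩
  · rw [X_pow_eq_monomial, divMonomial_add_modMonomial]
  · simpa [hN] using degreeOf_divMonomial_le x p (Finsupp.single x N)
  · simpa [hz.symm] using degreeOf_divMonomial_le z p (Finsupp.single x N)

theorem exists_pseudo_div (x : σ) {c t : MvPolynomial σ R} {d : ℕ} (hc : degreeOf x c = 0)
    (ht : degreeOf x t < d) (p : MvPolynomial σ R) :
    ∃ (e : ℕ) (q r : MvPolynomial σ R), c ^ e * p = q * (c * X x ^ d + t) + r ∧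
      degreeOf x r < d ∧
      ∀ z, z ≠ x → degreeOf z c = 0 → degreeOf z t = 0 → degreeOf z r ≤ degreeOf z p := by
  induction hN : degreeOf x p using Nat.strong_induction_on generalizing p with
  | _ N IH =>
  by_cases hNd : N < d
  · exact ⟨0, 0, p, by ring, hN ▸ hNd, fun _ _ _ _ => le_rfl⟩
  push Not at hNd
  obtain ⟨a, b, rfl, hax, hbx, habz⟩ := exists_eq_X_pow_mul_add x p hN (by omega)
  set p' := c * b - a * X x ^ (N - d) * t
  have hp' : c * (X x ^ N * a + b) = a * X x ^ (N - d) * (c * X x ^ d + t) + p' := by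
    rw [← Nat.sub_add_cancel hNd]
    simp only [p', Nat.add_sub_cancel, pow_add]
    ring
  have hdeg : ∀ z, degreeOf z (a * X x ^ (N - d) * t) ≤
      degreeOf z a + degreeOf z (X x ^ (N - d) : MvPolynomial σ R) + degreeOf z t := fun z =>
    (degreeOf_mul_le z _ _).trans (add_le_add_left (degreeOf_mul_le z _ _) _)
  have hp'x : degreeOf x p' < N := by
    refine (degreeOf_sub_le x _ _).trans_lt (max_lt ?_ ?_)
    · exact (degreeOf_mul_le x _ _).trans_lt (by rwa [hc, zero_add])
    · have := degreeOf_X_pow_le (R := R) x (N - d)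
      exact (hdeg x).trans_lt (by omega)
  have hp'z : ∀ z, z ≠ x → degreeOf z c = 0 → degreeOf z t = 0 →
      degreeOf z p' ≤ degreeOf z (X x ^ N * a + b) := by
    intro z hz hzc hzt
    refine (degreeOf_sub_le z _ _).trans (max_le ?_ ?_)
    · exact (degreeOf_mul_le z _ _).trans (by rw [hzc, zero_add]; exact (habz z hz).2)
    · refine (hdeg z).trans ?_
      rw [degreeOf_X_pow_of_ne _ hz, hzt, add_zero, add_zero]
      exact (habz z hz).1
  obtain ⟨e, q, r, hqr, hrx, hrz⟩ := IH _ (hN ▸ hp'x) p' rfl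
  refine ⟨e + 1, c ^ e * (a * X x ^ (N - d)) + q, r, ?_, hrx,
    fun z hz hzc hzt => (hrz z hz hzc hzt).trans (hp'z z hz hzc hzt)⟩
  linear_combination c ^ e * hp' + hqr

end Degrees

theorem degreeOf_apply_le {R S σ τ : Type*} [CommSemiring R] [CommSemiring S]
    (φ : MvPolynomial σ R →+* MvPolynomial τ S) {x : σ} {z : τ}
    (hC : ∀ a, degreeOf z (φ (C a)) = 0) (hx : degreeOf z (φ (X x)) ≤ 1)
    (hX : ∀ s, s ≠ x → degreeOf z (φ (X s)) = 0) (p : MvPolynomial σ R) :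
    degreeOf z (φ p) ≤ degreeOf x p := by
  classical
  conv_lhs => rw [p.as_sum, map_sum]
  refine (degreeOf_sum_le _ _ _).trans (Finset.sup_le fun μ hμ => ?_)
  refine le_trans ?_ (monomial_le_degreeOf x hμ)
  rw [monomial_eq, map_mul, Finsupp.prod, map_prod]
  refine (degreeOf_mul_le _ _ _).trans ?_
  rw [hC, zero_add]
  refine (degreeOf_prod_le _ _ _).trans ?_
  calc ∑ s ∈ μ.support, degreeOf z (φ (X s ^ μ s))
      ≤ ∑ s ∈ μ.support, if s = x then μ s else 0 := by
        refine Finset.sum_le_sum fun s _ => ?_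
        rw [map_pow]
        refine (degreeOf_pow_le _ _ _).trans ?_
        split_ifs with hs
        · exact (Nat.mul_le_mul_left _ (hs ▸ hx)).trans_eq (mul_one _)
        · rw [hX s hs, mul_zero]
    _ ≤ μ x := by
        rw [Finset.sum_ite_eq']
        split_ifs <;> simp

theorem isUnit_of_forall_degreeOf_eq_zero {K τ : Type*} [Field K] {p : MvPolynomial τ K}
    (hp : p ≠ 0) (h : ∀ j, degreeOf j p = 0) : IsUnit p := by
  have hC : p = C (coeff 0 p) := totalDegree_eq_zero_iff_eq_C.mp <|
    (totalDegree_eq_zero_iff _ p).mpr fun μ hμ j =>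
      Nat.le_zero.mp ((monomial_le_degreeOf j hμ).trans (h j).le)
  rw [hC] at hp ⊢
  exact (Ne.isUnit (fun h0 => hp (by rw [h0, C_0]))).map C

section LastVariable

variable (R : Type*) [CommRing R] (m : ℕ)

/-- `finSuccEquiv` singles out the variable `0`; rotating first singles out `Fin.last m`. -/
noncomputable def lastEquiv :
    MvPolynomial (Fin (m + 1)) R ≃ₐ[R] Polynomial (MvPolynomial (Fin m) R) :=
  (renameEquiv R (finRotate (m + 1))).trans (finSuccEquiv R m)

noncomputable def evalLastZero : MvPolynomial (Fin (m + 1)) R →+* MvPolynomial (Fin m) R :=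
  Polynomial.constantCoeff.comp (lastEquiv R m).toRingHom

variable {R m}

@[simp]
theorem lastEquiv_X_castSucc (i : Fin m) :
    lastEquiv R m (X i.castSucc) = Polynomial.C (X i) := by
  simp [lastEquiv, finRotate_apply, Fin.coeSucc_eq_succ, finSuccEquiv_X_succ]

@[simp]
theorem lastEquiv_X_last : lastEquiv R m (X (Fin.last m)) = Polynomial.X := by
  simp [lastEquiv, finSuccEquiv_X_zero]

theorem natDegree_lastEquiv (p : MvPolynomial (Fin (m + 1)) R) :
    (lastEquiv R m p).natDegree = degreeOf (Fin.last m) p := by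
  rw [lastEquiv, AlgEquiv.trans_apply, natDegree_finSuccEquiv, ← finRotate_last,
    renameEquiv_apply, degreeOf_rename_of_injective (finRotate _).injective]

theorem degreeOf_coeff_lastEquiv_le (p : MvPolynomial (Fin (m + 1)) R) (i : Fin m) (k : ℕ) :
    degreeOf i ((lastEquiv R m p).coeff k) ≤ degreeOf i.castSucc p := by
  rw [lastEquiv, AlgEquiv.trans_apply]
  refine (degreeOf_coeff_finSuccEquiv _ i k).trans_eq ?_
  rw [renameEquiv_apply, ← Fin.coeSucc_eq_succ, ← finRotate_apply,
    degreeOf_rename_of_injective (finRotate _).injective]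

theorem evalLastZero_X_castSucc (i : Fin m) : evalLastZero R m (X i.castSucc) = X i := by
  simp [evalLastZero]

theorem degreeOf_evalLastZero_le (i : Fin m) (p : MvPolynomial (Fin (m + 1)) R) :
    degreeOf i (evalLastZero R m p) ≤ degreeOf i.castSucc p := by
  simpa [evalLastZero, ← Polynomial.constantCoeff_apply]
    using degreeOf_coeff_lastEquiv_le p i 0

theorem lastEquiv_eq_C_evalLastZero {p : MvPolynomial (Fin (m + 1)) R}
    (hp : degreeOf (Fin.last m) p = 0) :
    lastEquiv R m p = Polynomial.C (evalLastZero R m p) := by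
  rw [Polynomial.eq_C_of_natDegree_eq_zero ((natDegree_lastEquiv p).trans hp)]
  simp [evalLastZero, Polynomial.constantCoeff_apply]

end LastVariable

section Parameters

variable (F U : Type*) [Field F] (m : ℕ)

/-- The embedding `F[U, Y] → F(U)[Y]`. -/
noncomputable def paramsToFrac :
    MvPolynomial (U ⊕ Fin m) F →+* MvPolynomial (Fin m) (FractionRing (MvPolynomial U F)) :=
  (map (algebraMap (MvPolynomial U F) (FractionRing (MvPolynomial U F)))).comp
    ((sumRingEquiv F (Fin m) U).toRingHom.comp (rename (Equiv.sumComm U (Fin m))).toRingHom)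

variable {F U m}

theorem paramsToFrac_injective : Function.Injective (paramsToFrac F U m) :=
  (map_injective _ (IsFractionRing.injective _ _)).comp
    ((sumRingEquiv F (Fin m) U).injective.comp (rename_injective _ (Equiv.injective _)))

@[simp]
theorem paramsToFrac_X_inr (i : Fin m) : paramsToFrac F U m (X (Sum.inr i)) = X i := by
  simp [paramsToFrac]

@[simp]
theorem paramsToFrac_X_inl (u : U) :
    paramsToFrac F U m (X (Sum.inl u)) =
      C (algebraMap (MvPolynomial U F) (FractionRing (MvPolynomial U F)) (X u)) := by
  simp [paramsToFrac]

@[simp]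
theorem paramsToFrac_C (a : F) :
    paramsToFrac F U m (C a) =
      C (algebraMap (MvPolynomial U F) (FractionRing (MvPolynomial U F)) (C a)) := by
  simp [paramsToFrac]

theorem paramsToFrac_rename_inl (L : MvPolynomial U F) :
    paramsToFrac F U m (rename Sum.inl L) =
      C (algebraMap (MvPolynomial U F) (FractionRing (MvPolynomial U F)) L) := by
  have : (paramsToFrac F U m).comp (rename Sum.inl).toRingHom =
      C.comp (algebraMap (MvPolynomial U F) (FractionRing (MvPolynomial U F))) := by
    apply ringHom_ext <;> intro <;> simp
  exact RingHom.congr_fun this L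

theorem degreeOf_paramsToFrac_le (j : Fin m) (p : MvPolynomial (U ⊕ Fin m) F) :
    degreeOf j (paramsToFrac F U m p) ≤ degreeOf (Sum.inr j) p := by
  classical
  refine degreeOf_apply_le _ (fun a => by simp [degreeOf_C]) ?_ ?_ p
  · rw [paramsToFrac_X_inr, degreeOf_X]; split_ifs <;> omega
  · rintro (u | i) h
    · simp [degreeOf_C]
    · rw [paramsToFrac_X_inr, degreeOf_X_of_ne (fun hij => h (by rw [hij]))]

theorem isUnit_paramsToFrac_rename_inl {L : MvPolynomial U F} (hL : L ≠ 0) :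
    IsUnit (paramsToFrac F U m (rename Sum.inl L)) := by
  rw [paramsToFrac_rename_inl]
  exact (Ne.isUnit fun h => hL (IsFractionRing.injective _ _ (h.trans (map_zero _).symm))).map C

end Parameters

variable {R : Type*} [CommRing R] {σ : Type*} {m : ℕ}

structure IsTriangular (y : Fin m → σ) (B init tail : Fin m → MvPolynomial σ R)
    (d : Fin m → ℕ) : Prop where
  eq_init_mul_add : ∀ i, B i = init i * X (y i) ^ d i + tail i
  degreeOf_tail_lt : ∀ i, degreeOf (y i) (tail i) < d i
  degreeOf_init : ∀ i j, i ≤ j → degreeOf (y j) (init i) = 0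
  degreeOf_of_lt : ∀ i j, i < j → degreeOf (y j) (B i) = 0

namespace IsTriangular

section

variable {y : Fin m → σ} {B init tail : Fin m → MvPolynomial σ R} {d : Fin m → ℕ}

theorem degreeOf_tail_of_lt (hT : IsTriangular y B init tail d) (hy : Function.Injective y)
    {i j : Fin m} (hij : i < j) : degreeOf (y j) (tail i) = 0 := by
  have htail : tail i = B i - init i * X (y i) ^ d i := by rw [hT.eq_init_mul_add i]; ring
  refine Nat.le_zero.mp ((htail ▸ degreeOf_sub_le _ _ _).trans (max_le ?_ ?_))
  · exact (hT.degreeOf_of_lt i j hij).le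
  · refine (degreeOf_mul_le _ _ _).trans ?_
    rw [hT.degreeOf_init i j hij.le, degreeOf_X_pow_of_ne _ (hy.ne hij.ne')]

theorem map {τ S : Type*} [CommRing S] {n : ℕ} (hT : IsTriangular y B init tail d)
    (φ : MvPolynomial σ R →+* MvPolynomial τ S) {κ : Fin n → Fin m} (hκ : StrictMono κ)
    {z : Fin n → τ} (hX : ∀ i, φ (X (y (κ i))) = X (z i))
    (hdeg : ∀ i p, degreeOf (z i) (φ p) ≤ degreeOf (y (κ i)) p) :
    IsTriangular z (fun i => φ (B (κ i))) (fun i => φ (init (κ i))) (fun i => φ (tail (κ i)))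
      (fun i => d (κ i)) where
  eq_init_mul_add i := by rw [hT.eq_init_mul_add, map_add, map_mul, map_pow, hX]
  degreeOf_tail_lt i := (hdeg i _).trans_lt (hT.degreeOf_tail_lt _)
  degreeOf_init i j hij :=
    Nat.le_zero.mp ((hdeg j _).trans (hT.degreeOf_init _ _ (hκ.monotone hij)).le)
  degreeOf_of_lt i j hij := Nat.le_zero.mp ((hdeg j _).trans (hT.degreeOf_of_lt _ _ (hκ hij)).le)

theorem exists_mul_sub_mem_span (hT : IsTriangular y B init tail d) (hy : Function.Injective y)
    (f : MvPolynomial σ R) :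
    ∃ h ∈ Submonoid.closure (Set.range init), ∃ r : MvPolynomial σ R,
      (∀ i, degreeOf (y i) r < d i) ∧ h * f - r ∈ Ideal.span (Set.range B) := by
  suffices key : ∀ k : ℕ, ∀ p : MvPolynomial σ R,
      (∀ i : Fin m, k ≤ i → degreeOf (y i) p < d i) →
      ∃ h ∈ Submonoid.closure (Set.range init), ∃ r : MvPolynomial σ R,
        (∀ i, degreeOf (y i) r < d i) ∧ h * p - r ∈ Ideal.span (Set.range B) from
    key m f fun i hi => absurd i.isLt (by omega)
  intro k
  induction k with
  | zero => exact fun p hp => ⟨1, one_mem _, p, fun i => hp i i.val.zero_le, by simp⟩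
  | succ k IH =>
  intro p hp
  by_cases hk : k < m
  swap
  · exact IH p fun i hi => absurd i.isLt (by omega)
  set i₀ : Fin m := ⟨k, hk⟩
  obtain ⟨e, q, r, hqr, hr₀, hr⟩ := exists_pseudo_div (y i₀) (hT.degreeOf_init i₀ i₀ le_rfl)
    (hT.degreeOf_tail_lt i₀) p
  rw [← hT.eq_init_mul_add] at hqr
  -- neither `init i₀` nor `tail i₀` involves the `y i` with `i > i₀`, so those stay reduced
  have hr' : ∀ i : Fin m, k ≤ i → degreeOf (y i) r < d i := by
    intro i hi
    rcases (show i₀ = i ∨ i₀ < i from eq_or_lt_of_le hi) with rfl | hlt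
    · exact hr₀
    · exact (hr _ (hy.ne hlt.ne') (hT.degreeOf_init _ _ hlt.le)
        (hT.degreeOf_tail_of_lt hy hlt)).trans_lt (hp i hlt)
  obtain ⟨h, hh, r', hr'd, hmem⟩ := IH r hr'
  have hinit : init i₀ ^ e ∈ Submonoid.closure (Set.range init) :=
    pow_mem (Submonoid.subset_closure (Set.mem_range_self i₀)) e
  refine ⟨h * init i₀ ^ e, mul_mem hh hinit, r', hr'd, ?_⟩
  have : h * init i₀ ^ e * p - r' = h * q * B i₀ + (h * r - r') := by
    linear_combination h * hqr
  rw [this]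
  exact add_mem (Ideal.mul_mem_left _ _ (Ideal.subset_span (Set.mem_range_self i₀))) hmem

end

theorem map_evalLastZero {B init tail : Fin (m + 1) → MvPolynomial (Fin (m + 1)) R}
    {d : Fin (m + 1) → ℕ} (hT : IsTriangular id B init tail d) :
    IsTriangular id (fun i => evalLastZero R m (B i.castSucc))
      (fun i => evalLastZero R m (init i.castSucc)) (fun i => evalLastZero R m (tail i.castSucc))
      (fun i => d i.castSucc) :=
  hT.map _ Fin.strictMono_castSucc evalLastZero_X_castSucc degreeOf_evalLastZero_le

theorem span_evalLastZero_eq_top {B init : Fin (m + 1) → MvPolynomial (Fin (m + 1)) R}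
    (hinv : ∀ i, Ideal.span (insert (init i) (B '' Set.Iio i)) = ⊤) (i : Fin m) :
    Ideal.span (insert (evalLastZero R m (init i.castSucc))
      ((fun j => evalLastZero R m (B j.castSucc)) '' Set.Iio i)) = ⊤ := by
  have : insert (evalLastZero R m (init i.castSucc))
      ((fun j => evalLastZero R m (B j.castSucc)) '' Set.Iio i) =
      evalLastZero R m '' insert (init i.castSucc) (B '' Set.Iio i.castSucc) := by
    rw [Set.image_insert_eq, ← Fin.image_castSucc_Iio, Set.image_image, Set.image_image]
  rw [this, ← Ideal.map_span, hinv, Ideal.map_top]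

theorem isUnit_mk_evalLastZero_init_last {B init : Fin (m + 1) → MvPolynomial (Fin (m + 1)) R}
    (hinv : Ideal.span (insert (init (Fin.last m)) (B '' Set.Iio (Fin.last m))) = ⊤) :
    IsUnit (Ideal.Quotient.mk
      (Ideal.span (Set.range fun j : Fin m => evalLastZero R m (B j.castSucc)))
      (evalLastZero R m (init (Fin.last m)))) := by
  set π := Ideal.Quotient.mk
    (Ideal.span (Set.range fun j : Fin m => evalLastZero R m (B j.castSucc)))
  have hzero : Ideal.span (π.comp (evalLastZero R m) '' (B '' Set.Iio (Fin.last m))) = ⊥ := by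
    refine Ideal.span_eq_bot.mpr ?_
    rintro _ ⟨_, ⟨j, hj, rfl⟩, rfl⟩
    obtain ⟨j, rfl⟩ := Fin.exists_castSucc_eq.mpr (ne_of_lt hj)
    exact Ideal.Quotient.eq_zero_iff_mem.mpr (Ideal.subset_span (Set.mem_range_self j))
  have := congrArg (Ideal.map (π.comp (evalLastZero R m))) hinv
  rw [Ideal.map_span, Ideal.map_top, Set.image_insert_eq, Ideal.span_insert, hzero,
    sup_bot_eq] at this
  exact Ideal.span_singleton_eq_top.mp this

theorem coeff_lastEquiv_mem_span {B init tail : Fin (m + 1) → MvPolynomial (Fin (m + 1)) R}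
    {d : Fin (m + 1) → ℕ} (hT : IsTriangular id B init tail d)
    (hinv : Ideal.span (insert (init (Fin.last m)) (B '' Set.Iio (Fin.last m))) = ⊤)
    {r : MvPolynomial (Fin (m + 1)) R} (hr : degreeOf (Fin.last m) r < d (Fin.last m))
    (hmem : r ∈ Ideal.span (Set.range B)) (k : ℕ) :
    (lastEquiv R m r).coeff k ∈
      Ideal.span (Set.range fun j : Fin m => evalLastZero R m (B j.castSucc)) := by
  set J := Ideal.span (Set.range fun j : Fin m => evalLastZero R m (B j.castSucc))
  set π := Ideal.Quotient.mk J
  set Φ := (Polynomial.mapRingHom π).comp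
    (lastEquiv R m : MvPolynomial (Fin (m + 1)) R →+* Polynomial (MvPolynomial (Fin m) R))
  have hΦ_lower : ∀ j : Fin m, Φ (B j.castSucc) = 0 := fun j => by
    have h : lastEquiv R m (B j.castSucc) = Polynomial.C (evalLastZero R m (B j.castSucc)) :=
      lastEquiv_eq_C_evalLastZero (hT.degreeOf_of_lt _ _ (Fin.castSucc_lt_last j))
    have hj : π (evalLastZero R m (B j.castSucc)) = 0 :=
      Ideal.Quotient.eq_zero_iff_mem.mpr (Ideal.subset_span (Set.mem_range_self j))
    rw [RingHom.comp_apply, RingHom.coe_coe, h, Polynomial.coe_mapRingHom, Polynomial.map_C, hj,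
      map_zero]
  have hΦ_init :
      Φ (init (Fin.last m)) = Polynomial.C (π (evalLastZero R m (init (Fin.last m)))) := by
    have h : lastEquiv R m (init (Fin.last m)) =
        Polynomial.C (evalLastZero R m (init (Fin.last m))) :=
      lastEquiv_eq_C_evalLastZero (hT.degreeOf_init _ _ le_rfl)
    simp [Φ, h]
  have hΦ_X : Φ (X (Fin.last m)) = Polynomial.X := by simp [Φ]
  have hdeg : ∀ p, degreeOf (Fin.last m) p < d (Fin.last m) → (Φ p).degree < d (Fin.last m) :=
    fun p hp => Polynomial.degree_map_le.trans_lt <| Polynomial.degree_le_natDegree.trans_lt <| by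
      exact_mod_cast (natDegree_lastEquiv p).trans_lt hp
  have hΦr : Φ r ∈ Ideal.span {Φ (B (Fin.last m))} := by
    have hΦmem : Φ r ∈ Ideal.span (Φ '' Set.range B) := by
      rw [← Ideal.map_span]
      exact Ideal.mem_map_of_mem Φ hmem
    refine Ideal.span_le.mpr ?_ hΦmem
    rintro _ ⟨_, ⟨i, rfl⟩, rfl⟩
    induction i using Fin.lastCases with
    | last => exact Ideal.subset_span rfl
    | cast j => exact (hΦ_lower j).symm ▸ zero_mem _
  rw [hT.eq_init_mul_add, map_add, map_mul, map_pow, hΦ_init, id, hΦ_X] at hΦr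
  have hΦr0 : Φ r = 0 := Polynomial.eq_zero_of_mem_span_C_mul_X_pow_add
    (isUnit_mk_evalLastZero_init_last hinv) (hdeg _ (hT.degreeOf_tail_lt _)) hΦr (hdeg r hr)
  rw [← Ideal.Quotient.eq_zero_iff_mem, ← Polynomial.coeff_map, ← Polynomial.coeff_zero k]
  exact congrArg (Polynomial.coeff · k) hΦr0

theorem eq_zero_of_mem_span : ∀ {m : ℕ} {B init tail : Fin m → MvPolynomial (Fin m) R}
    {d : Fin m → ℕ}, IsTriangular id B init tail d →
    (∀ i, Ideal.span (insert (init i) (B '' Set.Iio i)) = ⊤) →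
    ∀ {r : MvPolynomial (Fin m) R}, (∀ i, degreeOf i r < d i) →
    r ∈ Ideal.span (Set.range B) → r = 0
  | 0, B, _, _, _, _, _, r, _, hmem => by
    rwa [Set.range_eq_empty, Ideal.span_empty, Ideal.mem_bot] at hmem
  | m + 1, B, init, tail, d, hT, hinv, r, hr, hmem => by
    have hcoeff : ∀ k, (lastEquiv R m r).coeff k = 0 := fun k =>
      eq_zero_of_mem_span hT.map_evalLastZero (span_evalLastZero_eq_top hinv)
        (fun i => (degreeOf_coeff_lastEquiv_le r i k).trans_lt (hr _))
        (coeff_lastEquiv_mem_span hT (hinv _) (hr _) hmem k)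
    exact (lastEquiv R m).injective (by rw [map_zero]; exact Polynomial.ext hcoeff)

variable {F U : Type*} [Field F]

theorem eq_zero_of_rename_mul_mem_span {B init tail : Fin m → MvPolynomial (U ⊕ Fin m) F}
    {d : Fin m → ℕ} (hT : IsTriangular Sum.inr B init tail d) (hinit : ∀ i, init i ≠ 0)
    (hreg : ∀ i : Fin m, 0 < (i : ℕ) →
      ∃ q ∈ Ideal.span (insert (init i) (B '' Set.Iio i)),
        q ≠ 0 ∧ q ∈ (rename (Sum.inl : U → U ⊕ Fin m)).range)
    {r : MvPolynomial (U ⊕ Fin m) F} (hr : ∀ i, degreeOf (Sum.inr i) r < d i)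
    {L : MvPolynomial U F} (hL : L ≠ 0)
    (hLr : rename Sum.inl L * r ∈ Ideal.span (Set.range B)) : r = 0 := by
  set ψ := paramsToFrac F U m
  have hTψ : IsTriangular id (fun i => ψ (B i)) (fun i => ψ (init i)) (fun i => ψ (tail i)) d :=
    hT.map ψ strictMono_id paramsToFrac_X_inr degreeOf_paramsToFrac_le
  have hinvψ : ∀ i, Ideal.span (insert (ψ (init i)) ((fun j => ψ (B j)) '' Set.Iio i)) = ⊤ := by
    intro i
    rcases Nat.eq_zero_or_pos i with hi | hi
    · -- the first initial involves none of the `y j`, so its image is a nonzero constant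
      refine Ideal.eq_top_of_isUnit_mem _ (Ideal.subset_span (Set.mem_insert _ _)) ?_
      refine isUnit_of_forall_degreeOf_eq_zero
        (paramsToFrac_injective.ne_iff' (map_zero _) |>.mpr (hinit i)) fun j => Nat.le_zero.mp ?_
      exact (degreeOf_paramsToFrac_le j _).trans
        (hT.degreeOf_init i j (by simp [Fin.le_def, hi])).le
    · obtain ⟨q, hq, hq0, L₀, rfl⟩ := hreg i hi
      have hψq : ψ (rename Sum.inl L₀) ∈
          Ideal.span (ψ '' insert (init i) (B '' Set.Iio i)) := by
        rw [← Ideal.map_span]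
        exact Ideal.mem_map_of_mem ψ hq
      rw [Set.image_insert_eq, Set.image_image] at hψq
      exact Ideal.eq_top_of_isUnit_mem _ hψq
        (isUnit_paramsToFrac_rename_inl fun h => hq0 (by rw [h, map_zero]))
  have hmemψ : ψ r ∈ Ideal.span (Set.range fun i => ψ (B i)) := by
    have : ψ (rename Sum.inl L * r) ∈ Ideal.span (ψ '' Set.range B) := by
      rw [← Ideal.map_span]
      exact Ideal.mem_map_of_mem ψ hLr
    rw [map_mul, ← Set.range_comp] at this
    exact (Ideal.unit_mul_mem_iff_mem _ (isUnit_paramsToFrac_rename_inl hL)).mp this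
  exact paramsToFrac_injective <| (map_zero ψ).symm ▸ hTψ.eq_zero_of_mem_span hinvψ
    (fun i => (degreeOf_paramsToFrac_le i r).trans_lt (hr i)) hmemψ

end IsTriangular

end MvPolynomial

variable {F : Type*} [Field F] {U : Type*} {m : ℕ}

theorem stmt_8_general (B init tail : Fin m → MvPolynomial (U ⊕ Fin m) F) (d : Fin m → ℕ)
    -- triangular set with leading variable `y_i`, main degree `d i` and initial `init i`:
    (hdecomp : ∀ i, B i = init i * (X (Sum.inr i)) ^ (d i) + tail i)
    (htail : ∀ i, (tail i).degreeOf (Sum.inr i) < d i)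
    (hinitvars : ∀ i j : Fin m, (i : ℕ) ≤ (j : ℕ) → (init i).degreeOf (Sum.inr j) = 0)
    (htri : ∀ i j : Fin m, (i : ℕ) < (j : ℕ) → (B i).degreeOf (Sum.inr j) = 0)
    -- regular chain: each initial is invertible w.r.t. the previous elements,
    -- i.e. the ideal it generates with them meets `F[U] \ {0}`:
    (hreg : ∀ i : Fin m, 0 < (i : ℕ) →
      ∃ q : MvPolynomial (U ⊕ Fin m) F, q ≠ 0 ∧
        q ∈ (MvPolynomial.rename (Sum.inl : U → U ⊕ Fin m)).range ∧
        q ∈ Ideal.span (insert (init i) {p | ∃ j : Fin m, (j : ℕ) < (i : ℕ) ∧ p = B j}))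
    (f : MvPolynomial (U ⊕ Fin m) F) (L : MvPolynomial U F) (hL : L ≠ 0)
    (hLf : (MvPolynomial.rename (Sum.inl : U → U ⊕ Fin m)) L * f ∈
      Ideal.span (Set.range B)) :
    ∃ h ∈ Submonoid.closure (Set.range init), h * f ∈ Ideal.span (Set.range B) := by
  have hT : IsTriangular Sum.inr B init tail d := ⟨hdecomp, htail, hinitvars, htri⟩
  by_cases hzero : ∃ i, init i = 0
  · obtain ⟨i, hi⟩ := hzero
    exact ⟨0, hi ▸ Submonoid.subset_closure (Set.mem_range_self i), by simp⟩
  push Not at hzero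
  obtain ⟨h, hh, r, hr, hhr⟩ := hT.exists_mul_sub_mem_span Sum.inr_injective f
  have hLr : rename Sum.inl L * r ∈ Ideal.span (Set.range B) := by
    have : rename Sum.inl L * r =
        h * (rename Sum.inl L * f) - rename Sum.inl L * (h * f - r) := by ring
    rw [this]
    exact sub_mem (Ideal.mul_mem_left _ _ hLf) (Ideal.mul_mem_left _ _ hhr)
  have hset : ∀ i : Fin m, {p | ∃ j : Fin m, (j : ℕ) < (i : ℕ) ∧ p = B j} = B '' Set.Iio i :=
    fun i => by ext; simp [eq_comm]
  have hr0 : r = 0 := hT.eq_zero_of_rename_mul_mem_span hzero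
    (fun i hi => by
      obtain ⟨q, hq0, hqU, hq⟩ := hreg i hi
      exact ⟨q, hset i ▸ hq, hq0, hqU⟩)
    hr hL hLr
  exact ⟨h, hh, by simpa [hr0] using hhr⟩

/-- Let `B₁,…,B_m` be a regular chain in `F[U, Y]` (with `Y = (y₁,…,y_m)`,
`lv(B_i) = y_i`, initials `init i`), let `f ∈ F[U, Y]` and let `L ∈ F[U]` be nonzero with
`L·f ∈ (B)`.  Then `f ∈ asat(B) = (B) : init_B^∞`. -/
theorem stmt_8 (B init tail : Fin m → MvPolynomial (U ⊕ Fin m) F) (d : Fin m → ℕ)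
    -- triangular set with leading variable `y_i`, main degree `d i` and initial `init i`:
    (hdecomp : ∀ i, B i = init i * (X (Sum.inr i)) ^ (d i) + tail i)
    (hdpos : ∀ i, 0 < d i)
    (htail : ∀ i, (tail i).degreeOf (Sum.inr i) < d i)
    (hinitvars : ∀ i j : Fin m, (i : ℕ) ≤ (j : ℕ) → (init i).degreeOf (Sum.inr j) = 0)
    (htri : ∀ i j : Fin m, (i : ℕ) < (j : ℕ) → (B i).degreeOf (Sum.inr j) = 0)
    -- regular chain: each initial is invertible w.r.t. the previous elements,
    -- i.e. the ideal it generates with them meets `F[U] \ {0}`: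
    (hreg : ∀ i : Fin m, 0 < (i : ℕ) →
      ∃ q : MvPolynomial (U ⊕ Fin m) F, q ≠ 0 ∧
        q ∈ (MvPolynomial.rename (Sum.inl : U → U ⊕ Fin m)).range ∧
        q ∈ Ideal.span (insert (init i) {p | ∃ j : Fin m, (j : ℕ) < (i : ℕ) ∧ p = B j}))
    (f : MvPolynomial (U ⊕ Fin m) F) (L : MvPolynomial U F) (hL : L ≠ 0)
    (hLf : (MvPolynomial.rename (Sum.inl : U → U ⊕ Fin m)) L * f ∈
      Ideal.span (Set.range B)) :
    ∃ h ∈ Submonoid.closure (Set.range init), h * f ∈ Ideal.span (Set.range B) :=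
  stmt_8_general B init tail d hdecomp htail hinitvars htri hreg f L hL hLf
end

section
/- Let M be an (n+1) × n matrix over a field with rank(M) = n. For a subset T of the row indices, let M_T be the submatrix of rows indexed by T. Then: (a) for every T, |T| − rank(M_T) ≤ 1; and (b) there exists a unique subset T with |T| − rank(M_T) = 1 such that every proper subset J ⊊ T satisfies |J| = rank(M_J). -/
/-!
The left kernel of `M` is a line `K ∙ c`. Extension by zero identifies the left kernel of `M_T`
with the vectors of that line supported in `T`, so `|T| - rank M_T`, the dimension of the left
kernel of `M_T`, is `1` if `supp c ⊆ T` and `0` otherwise. The super-essential set is therefore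
`supp c`, the unique minimal `T` containing it.
-/

open Matrix Module Function Submodule

theorem Set.Finite.existsUnique_minimal_finset_superset {α : Type*} {s : Set α}
    (hs : s.Finite) : ∃! t : Finset α, s ⊆ t ∧ ∀ u ⊂ t, ¬ s ⊆ u := by
  refine ⟨hs.toFinset, ⟨hs.coe_toFinset.superset, fun u hu hsu => ?_⟩,
    fun t ⟨hst, hmin⟩ => ?_⟩
  · exact hu.not_subset (hs.toFinset_subset.mpr hsu)
  · by_contra hne
    exact hmin _ ((hs.toFinset_subset.mpr hst).ssubset_of_ne (Ne.symm hne)) hs.coe_toFinset.superset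

theorem Function.ExtendByZero.linearMap_injective {R ι η : Type*} [Semiring R] {f : ι → η}
    (hf : Injective f) : Injective (ExtendByZero.linearMap R f) :=
  extend_injective hf _

namespace Matrix

section Semiring

variable {R m n ι : Type*} [Semiring R] [Fintype m] [Fintype ι]

theorem vecMul_submatrix_of_injective {f : ι → m} (hf : Injective f) (A : Matrix m n R)
    (v : ι → R) : v ᵥ* A.submatrix f id = extend f v 0 ᵥ* A := by
  ext j
  refine Fintype.sum_of_injective f hf _ _ (fun i hi => ?_) (fun i => ?_)
  · rw [extend_apply' _ _ _ hi, Pi.zero_apply, zero_mul]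
  · rw [hf.extend_apply]
    rfl

theorem ker_vecMulLinear_submatrix [Fintype n] {f : ι → m} (hf : Injective f)
    (A : Matrix m n R) :
    LinearMap.ker (A.submatrix f id).vecMulLinear =
      (LinearMap.ker A.vecMulLinear).comap (ExtendByZero.linearMap R f) := by
  ext v
  simp only [LinearMap.mem_ker, mem_comap, vecMulLinear_apply, vecMul_submatrix_of_injective hf]
  rfl

end Semiring

variable {K m n ι : Type*} [Field K] [Fintype n]

theorem card_eq_rank_add_finrank_ker_vecMulLinear [Fintype m] (A : Matrix m n K) :
    Fintype.card m = A.rank + finrank K (LinearMap.ker A.vecMulLinear) := by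
  rw [← rank_transpose, Matrix.rank, mulVecLin_transpose, LinearMap.finrank_range_add_finrank_ker,
    finrank_fintype_fun_eq_card]

theorem card_eq_rank_submatrix_add_finrank_ker (A : Matrix m n K) (T : Finset m) :
    T.card = (A.submatrix (fun x : {x // x ∈ T} => (x : m)) id).rank +
      finrank K
        (LinearMap.ker (A.submatrix (fun x : {x // x ∈ T} => (x : m)) id).vecMulLinear) := by
  rw [← card_eq_rank_add_finrank_ker_vecMulLinear, Fintype.card_coe]

variable [Fintype m] [Fintype ι]

theorem finrank_ker_vecMulLinear_submatrix_le {f : ι → m} (hf : Injective f) (A : Matrix m n K) :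
    finrank K (LinearMap.ker (A.submatrix f id).vecMulLinear) ≤
      finrank K (LinearMap.ker A.vecMulLinear) := by
  rw [ker_vecMulLinear_submatrix hf,
    (equivMapOfInjective _ (ExtendByZero.linearMap_injective hf) _).finrank_eq]
  exact finrank_mono (map_comap_le _ _)

theorem ker_vecMulLinear_submatrix_ne_bot_iff {f : ι → m} (hf : Injective f) (A : Matrix m n K) :
    LinearMap.ker (A.submatrix f id).vecMulLinear ≠ ⊥ ↔
      ∃ v ∈ LinearMap.ker A.vecMulLinear, v ≠ 0 ∧ support v ⊆ Set.range f := by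
  rw [ker_vecMulLinear_submatrix hf, Submodule.ne_bot_iff]
  constructor
  · rintro ⟨w, hw, hw0⟩
    refine ⟨_, hw, (map_ne_zero_iff _ (ExtendByZero.linearMap_injective hf)).mpr hw0, ?_⟩
    intro i hi
    by_contra hif
    rw [mem_support, ExtendByZero.linearMap_apply, extend_apply' _ _ _ hif] at hi
    exact hi rfl
  · rintro ⟨v, hv, hv0, hsupp⟩
    have hv_eq : ExtendByZero.linearMap K f (v ∘ f) = v := by
      ext i
      rw [ExtendByZero.linearMap_apply]
      by_cases hi : ∃ a, f a = i
      · obtain ⟨a, rfl⟩ := hi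
        exact hf.extend_apply _ _ a
      · rw [extend_apply' _ _ _ hi]
        exact (notMem_support.mp fun h => hi (hsupp h)).symm
    exact ⟨v ∘ f, by rwa [mem_comap, hv_eq], fun h => hv0 (by rw [← hv_eq, h, map_zero])⟩

theorem card_le_rank_submatrix_add_finrank_ker (A : Matrix m n K) (T : Finset m) :
    T.card ≤ (A.submatrix (fun x : {x // x ∈ T} => (x : m)) id).rank +
      finrank K (LinearMap.ker A.vecMulLinear) :=
  card_eq_rank_submatrix_add_finrank_ker A T ▸
    Nat.add_le_add_left (finrank_ker_vecMulLinear_submatrix_le Subtype.val_injective A) _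

section LeftKernelOfDimensionOne

variable {A : Matrix m n K} {c : m → K}

theorem exists_ker_vecMulLinear_eq_span_singleton (hA : A.rank + 1 = Fintype.card m) :
    ∃ c ≠ 0, LinearMap.ker A.vecMulLinear = K ∙ c := by
  have hA' : finrank K (LinearMap.ker A.vecMulLinear) = 1 := by
    have := card_eq_rank_add_finrank_ker_vecMulLinear A
    omega
  obtain ⟨c, hc, hc0⟩ := (Submodule.ne_bot_iff _).mp
    (Submodule.finrank_eq_zero.not.mp (hA' ▸ one_ne_zero))
  exact ⟨c, hc0, eq_span_singleton_of_mem_of_finrank_eq_one hA' hc hc0⟩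

theorem ker_vecMulLinear_submatrix_ne_bot_iff_support_subset
    (hc : LinearMap.ker A.vecMulLinear = K ∙ c) (hc0 : c ≠ 0) {f : ι → m} (hf : Injective f) :
    LinearMap.ker (A.submatrix f id).vecMulLinear ≠ ⊥ ↔ support c ⊆ Set.range f := by
  rw [ker_vecMulLinear_submatrix_ne_bot_iff hf, hc]
  constructor
  · rintro ⟨v, hv, hv0, hsupp⟩
    obtain ⟨a, rfl⟩ := mem_span_singleton.mp hv
    rwa [support_const_smul_of_ne_zero _ _ (left_ne_zero_of_smul hv0)] at hsupp
  · exact fun h => ⟨c, mem_span_singleton_self c, hc0, h⟩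

theorem card_eq_rank_submatrix_iff (hc : LinearMap.ker A.vecMulLinear = K ∙ c) (hc0 : c ≠ 0)
    (T : Finset m) :
    T.card = (A.submatrix (fun x : {x // x ∈ T} => (x : m)) id).rank ↔ ¬ support c ⊆ T := by
  rw [card_eq_rank_submatrix_add_finrank_ker A T, Nat.add_eq_left, Submodule.finrank_eq_zero,
    ← not_iff_not, not_not, ← ne_eq,
    ker_vecMulLinear_submatrix_ne_bot_iff_support_subset hc hc0 Subtype.val_injective,
    Subtype.range_coe_subtype, Finset.setOfPred_mem]

theorem card_eq_rank_submatrix_add_one_iff (hc : LinearMap.ker A.vecMulLinear = K ∙ c)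
    (hc0 : c ≠ 0) (T : Finset m) :
    T.card = (A.submatrix (fun x : {x // x ∈ T} => (x : m)) id).rank + 1 ↔ support c ⊆ T := by
  have hle := card_le_rank_submatrix_add_finrank_ker A T
  have hge := card_eq_rank_submatrix_add_finrank_ker A T
  rw [hc, finrank_span_singleton hc0] at hle
  rw [← not_iff_not, ← card_eq_rank_submatrix_iff hc hc0]
  omega

end LeftKernelOfDimensionOne

end Matrix

/-- Let `M` be an `(n+1) × n` matrix over a field with `rank M = n`.
For `T` a subset of row indices, `M_T` is the submatrix of rows indexed by `T`. Then
(a) for every `T`, `|T| − rank(M_T) ≤ 1`, and (b) there exists a unique subset `T`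
with `|T| − rank(M_T) = 1` such that every proper subset `J ⊊ T` has full row rank. -/
theorem stmt_13 {K : Type*} [Field K] {n : ℕ}
    (M : Matrix (Fin (n + 1)) (Fin n) K) (hM : M.rank = n) :
    (∀ T : Finset (Fin (n + 1)),
        T.card ≤ (M.submatrix (fun x : {x // x ∈ T} => (x : Fin (n + 1))) id).rank + 1) ∧
    (∃! T : Finset (Fin (n + 1)),
        T.card = (M.submatrix (fun x : {x // x ∈ T} => (x : Fin (n + 1))) id).rank + 1 ∧
        ∀ J : Finset (Fin (n + 1)), J ⊂ T →
          J.card = (M.submatrix (fun x : {x // x ∈ J} => (x : Fin (n + 1))) id).rank) := by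
  obtain ⟨c, hc0, hc⟩ := exists_ker_vecMulLinear_eq_span_singleton (A := M) (by simp [hM])
  refine ⟨fun T => ?_, ?_⟩
  · have := card_le_rank_submatrix_add_finrank_ker M T
    rwa [hc, finrank_span_singleton hc0] at this
  · simp only [card_eq_rank_submatrix_add_one_iff hc hc0, card_eq_rank_submatrix_iff hc hc0]
    exact (Set.toFinite _).existsUnique_minimal_finset_superset
end
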